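/- arXiv:1210.6908 — 9 statements merged into one kernel-verified Lean document; each statement's English description precedes it below -/
import Mathlib

section
/- For a uniformly random permutation π of size n and an integer 1 ≤ k ≤ n, the expected size of the sub-permutation of π generated by the entry k equals (2n − k + 1)/(k + 1). -/
def infixes (l : List ℕ) : List (List ℕ) := (l.tails.map List.inits).flatten

def genLen (l : List ℕ) (k : ℕ) : ℕ :=
  (((infixes l).filter
      (fun s => s.contains k && s.all (fun x => decide (k ≤ x)))).map
    List.length).foldr max 0

/-!
Write `S n` for the total of `genLen π k` over the permutations `π` of `1, …, n`. Inserting the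
new maximum `n + 1` into one of the `n + 1` gaps of `π` lengthens the block of entries `≥ k`
around `k` by one exactly when the gap lies inside or at the ends of that block, i.e. for
`genLen π k + 1` of the gaps, and leaves it unchanged otherwise. Hence
`S (n + 1) = (n + 2) S n + n!`, while `S k = k!` because `k` is then the maximum, and
`(k + 1) S n = n! (2n - k + 1)` follows by induction on `n ≥ k`.
-/

namespace List

variable {α : Type*}

theorem prefix_takeWhile_of_forall {p : α → Bool} {u l : List α} (hu : u <+: l)
    (hp : ∀ x ∈ u, p x) : u <+: l.takeWhile p := by
  obtain ⟨t, rfl⟩ := hu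
  rw [takeWhile_append_of_pos hp]
  exact prefix_append _ _

theorem append_cons_infix_append_cons_iff {a : α} {u v l₁ l₂ : List α} (h₁ : a ∉ l₁)
    (h₂ : a ∉ l₂) : u ++ a :: v <:+: l₁ ++ a :: l₂ ↔ u <:+ l₁ ∧ v <+: l₂ := by
  constructor
  · rintro ⟨s, t, h⟩
    rw [eq_comm, show s ++ (u ++ a :: v) ++ t = (s ++ u) ++ a :: (v ++ t) by simp,
      append_cons_inj_of_notMem h₁ h₂] at h
    obtain ⟨rfl, -, rfl⟩ := h
    exact ⟨suffix_append _ _, prefix_append _ _⟩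
  · rintro ⟨⟨s, rfl⟩, ⟨t, rfl⟩⟩
    exact ⟨s, t, by simp⟩

theorem permutations'Aux_append_cons (a y : α) (l₁ l₂ : List α) :
    permutations'Aux a (l₁ ++ y :: l₂) =
      (permutations'Aux a l₁).map (· ++ y :: l₂) ++
        (permutations'Aux a l₂).map (l₁ ++ y :: ·) := by
  induction l₁ with
  | nil => simp [permutations'Aux]
  | cons z l₁ ih => simp [permutations'Aux, ih, Function.comp_def]

theorem map_reverse_permutations'Aux (a : α) (l : List α) :
    (permutations'Aux a l).map reverse = (permutations'Aux a l.reverse).reverse := by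
  induction l using reverseRecOn with
  | nil => simp [permutations'Aux]
  | append_singleton l y ih =>
    simp [permutations'Aux_append_cons, permutations'Aux, ← map_reverse, ← ih,
      Function.comp_def]

theorem perm_of_mem_permutations'Aux {a : α} {l l' : List α}
    (h : l' ∈ permutations'Aux a l) : l' ~ a :: l :=
  mem_permutations'.1 (mem_flatMap.2 ⟨l, mem_permutations'.2 (Perm.refl _), h⟩)

theorem sum_map_length_takeWhile_permutations'Aux {p : α → Bool} {a : α} (ha : p a)
    (l : List α) :
    ((permutations'Aux a l).map fun l' => (l'.takeWhile p).length).sum =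
      (l.length + 2) * (l.takeWhile p).length + 1 := by
  induction l with
  | nil => simp [permutations'Aux, ha]
  | cons y l ih =>
    cases hy : p y
    · simp [permutations'Aux, ha, hy, Function.comp_def]
    · simp [permutations'Aux, ha, hy, Function.comp_def, sum_map_add, ih]
      ring

theorem exists_append_cons_of_nodup {a : α} {l : List α} (hl : l.Nodup)
    (ha : a ∈ l) : ∃ A B, l = A ++ a :: B ∧ a ∉ A ∧ a ∉ B := by
  obtain ⟨A, B, rfl⟩ := append_of_mem ha
  simp only [nodup_middle, nodup_cons, mem_append, not_or] at hl
  exact ⟨A, B, rfl, hl.1⟩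

end List

open List
open scoped Nat

theorem mem_infixes {s l : List ℕ} : s ∈ infixes l ↔ s <:+: l := by
  simp [infixes, infix_iff_prefix_suffix, and_comm]

theorem mem_map_length_filter_infixes {l : List ℕ} {k m : ℕ} :
    m ∈ ((infixes l).filter
        (fun s => s.contains k && s.all (fun x => decide (k ≤ x)))).map length ↔
      ∃ s, s <:+: l ∧ k ∈ s ∧ (∀ x ∈ s, k ≤ x) ∧ s.length = m := by
  simp [mem_infixes, and_assoc]

theorem genLen_le {l : List ℕ} {k m : ℕ}
    (h : ∀ s, s <:+: l → k ∈ s → (∀ x ∈ s, k ≤ x) → s.length ≤ m) :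
    genLen l k ≤ m := by
  refine max_le_of_forall_le _ _ fun _ hx => ?_
  obtain ⟨s, hs, hk, hall, rfl⟩ := mem_map_length_filter_infixes.1 hx
  exact h s hs hk hall

theorem le_genLen {l s : List ℕ} {k : ℕ} (hs : s <:+: l) (hk : k ∈ s)
    (hall : ∀ x ∈ s, k ≤ x) : s.length ≤ genLen l k :=
  le_max_of_le (mem_map_length_filter_infixes.2 ⟨s, hs, hk, hall, rfl⟩) le_rfl

theorem genLen_append_cons {A B : List ℕ} {k : ℕ} (hA : k ∉ A) (hB : k ∉ B) :
    genLen (A ++ k :: B) k =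
      (A.reverse.takeWhile (k ≤ ·)).length + 1 + (B.takeWhile (k ≤ ·)).length := by
  apply le_antisymm
  · refine genLen_le fun s hs hks hall => ?_
    obtain ⟨u, v, rfl⟩ := append_of_mem hks
    obtain ⟨hu, hv⟩ := (append_cons_infix_append_cons_iff hA hB).1 hs
    have hu' : u.reverse.length ≤ (A.reverse.takeWhile (k ≤ ·)).length :=
      (prefix_takeWhile_of_forall (reverse_prefix.2 hu) (by simp_all)).length_le
    have hv' : v.length ≤ (B.takeWhile (k ≤ ·)).length :=
      (prefix_takeWhile_of_forall hv (by simp_all)).length_le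
    rw [length_reverse] at hu'
    simp only [length_append, length_cons]
    omega
  · have hsuf : (A.reverse.takeWhile (k ≤ ·)).reverse <:+ A :=
      reverse_prefix.1 (by simpa only [reverse_reverse] using takeWhile_prefix _)
    have hs := le_genLen (k := k)
      ((append_cons_infix_append_cons_iff hA hB).2 ⟨hsuf, takeWhile_prefix _⟩)
      (mem_append_right _ mem_cons_self)
      (by
        simp only [mem_append, mem_reverse, mem_cons]
        rintro x (hx | rfl | hx)
        · simpa using mem_takeWhile_imp (p := fun y => decide (k ≤ y)) hx
        · exact le_rfl
        · simpa using mem_takeWhile_imp (p := fun y => decide (k ≤ y)) hx)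
    simp only [length_append, length_reverse, length_cons] at hs
    omega

theorem genLen_eq_one {l : List ℕ} {k : ℕ} (hl : l.Nodup) (hk : k ∈ l)
    (hle : ∀ x ∈ l, x ≤ k) : genLen l k = 1 := by
  obtain ⟨A, B, rfl, hA, hB⟩ := exists_append_cons_of_nodup hl hk
  have hrun : ∀ L : List ℕ, k ∉ L → (∀ x ∈ L, x ≤ k) →
      L.takeWhile (k ≤ ·) = [] := by
    refine fun L hL hLk => eq_nil_iff_forall_not_mem.2 fun x hx => hL ?_
    have hkx := of_decide_eq_true (mem_takeWhile_imp (p := fun y => decide (k ≤ y)) hx)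
    have hxL := (takeWhile_prefix _).subset hx
    rwa [le_antisymm (hLk x hxL) hkx] at hxL
  rw [genLen_append_cons hA hB, hrun _ (by simpa using hA) (by simp_all),
    hrun _ hB (by simp_all)]
  rfl

theorem sum_map_genLen_permutations'Aux {l : List ℕ} {k a : ℕ} (hl : l.Nodup) (hk : k ∈ l)
    (hka : k < a) :
    ((permutations'Aux a l).map (genLen · k)).sum = (l.length + 2) * genLen l k + 1 := by
  obtain ⟨A, B, rfl, hA, hB⟩ := exists_append_cons_of_nodup hl hk
  have hins : ∀ {L : List ℕ}, k ∉ L → ∀ L' ∈ permutations'Aux a L, k ∉ L' :=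
    fun hL _ hL' hkL' => by
      simpa [hka.ne, hL] using (perm_of_mem_permutations'Aux hL').subset hkL'
  have hrev :
      ((permutations'Aux a A.reverse).map fun A' => (A'.takeWhile (k ≤ ·)).length).sum =
        ((permutations'Aux a A).map fun A' => (A'.reverse.takeWhile (k ≤ ·)).length).sum := by
    rw [← sum_reverse, ← map_reverse, ← map_reverse_permutations'Aux, map_map]
    rfl
  rw [permutations'Aux_append_cons, map_append, List.sum_append, map_map, map_map]
  simp only [Function.comp_def]
  rw [map_congr_left fun A' hA' => genLen_append_cons (hins hA A' hA') hB,
    map_congr_left fun B' hB' => genLen_append_cons hA (hins hB B' hB')]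
  simp only [sum_map_add, map_const', sum_replicate, ← hrev,
    sum_map_length_takeWhile_permutations'Aux (p := (k ≤ ·)) (decide_eq_true hka.le),
    genLen_append_cons hA hB, length_permutations'Aux, length_append, length_cons, length_reverse,
    smul_eq_mul]
  ring

theorem sum_map_genLen_permutations_cons {l : List ℕ} {k a : ℕ} (hl : l.Nodup) (hk : k ∈ l)
    (hka : k < a) :
    ((a :: l).permutations.map (genLen · k)).sum =
      (l.length + 2) * (l.permutations.map (genLen · k)).sum + l.length ! := by
  have hperm := permutations_perm_permutations' l
  calc ((a :: l).permutations.map (genLen · k)).sum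
      = ((l.permutations'.flatMap (permutations'Aux a)).map (genLen · k)).sum :=
        ((permutations_perm_permutations' _).map _).sum_eq
    _ = (l.permutations'.map fun π => (l.length + 2) * genLen π k + 1).sum := by
        rw [map_flatMap, flatMap_def, sum_flatten, map_map]
        congr 1
        refine map_congr_left fun π hπ => ?_
        have hπl : π ~ l := mem_permutations'.1 hπ
        rw [Function.comp_apply,
          sum_map_genLen_permutations'Aux (hπl.nodup_iff.2 hl) (hπl.mem_iff.2 hk) hka,
          hπl.length_eq]
    _ = (l.length + 2) * (l.permutations.map (genLen · k)).sum + l.length ! := by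
        rw [sum_map_add, sum_map_mul_left, (hperm.map _).sum_eq, map_const', sum_replicate,
          ← hperm.length_eq, length_permutations, smul_eq_mul, mul_one]

theorem sum_map_genLen_permutations_of_forall_le {l : List ℕ} {k : ℕ} (hl : l.Nodup)
    (hk : k ∈ l) (hle : ∀ x ∈ l, x ≤ k) :
    (l.permutations.map (genLen · k)).sum = l.length ! := by
  rw [map_congr_left fun π hπ => ?_, map_const', sum_replicate, length_permutations, smul_eq_mul,
    mul_one]
  have hπl : π ~ l := mem_permutations.1 hπ
  exact genLen_eq_one (hπl.nodup_iff.2 hl) (hπl.mem_iff.2 hk) fun x hx => hle x (hπl.subset hx)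

theorem succ_mul_sum_map_genLen_permutations_range' {n k : ℕ} (hk1 : 1 ≤ k) (hkn : k ≤ n) :
    ((k : ℚ) + 1) * ((range' 1 n).permutations.map (genLen · k)).sum =
      n ! * (2 * n - k + 1) := by
  induction n, hkn using Nat.le_induction with
  | base =>
    rw [sum_map_genLen_permutations_of_forall_le nodup_range' (by rw [mem_range'_1]; omega)
      (fun x hx => by rw [mem_range'_1] at hx; omega), length_range']
    ring
  | succ m hkm ih =>
    have hperm : range' 1 (m + 1) ~ (m + 1) :: range' 1 m := by
      rw [range'_concat, Nat.one_mul, Nat.add_comm 1 m]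
      exact perm_append_singleton _ _
    rw [((hperm.permutations).map _).sum_eq, sum_map_genLen_permutations_cons nodup_range'
      (by rw [mem_range'_1]; omega) (by omega), length_range', Nat.factorial_succ]
    push_cast at ih ⊢
    linear_combination ((m : ℚ) + 2) * ih

/-- For a uniformly random permutation `π` of `{1,...,n}` and `1 ≤ k ≤ n`, the
expected size of the sub-permutation of `π` generated by the entry `k` equals
`(2n - k + 1)/(k + 1)`. -/
theorem expected_genLen (n k : ℕ) (hk1 : 1 ≤ k) (hkn : k ≤ n) :
    (((List.range' 1 n).permutations.map (fun l => (genLen l k : ℚ))).sum) /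
        (n.factorial : ℚ) =
      (2 * (n : ℚ) - k + 1) / ((k : ℚ) + 1) := by
  have h := succ_mul_sum_map_genLen_permutations_range' hk1 hkn
  simp only [Nat.cast_list_sum, map_map, Function.comp_def] at h
  rw [div_eq_div_iff (by positivity) (by positivity)]
  linear_combination h
end

section
/- Let v_{j,n} be the number of binary rooted planar trees with n internal nodes (each internal node having exactly two children) whose largest caterpillar subtree has at most j internal nodes. Then the generating function P_j(x) = Σ_{n≥0} v_{j,n} x^n satisfies P_j = 1 + x·P_j² − 2^j·x^{j+1}. -/
/-- Binary rooted planar trees in which every internal node has exactly two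
children. -/
inductive BTree where
  | leaf : BTree
  | node : BTree → BTree → BTree

/-- The size of a tree: its number of internal nodes. -/
def BTree.size : BTree → ℕ
  | .leaf => 0
  | .node l r => l.size + r.size + 1

/-- A tree is a caterpillar if every node is a leaf or has at least one leaf as
a child. -/
def BTree.IsCat : BTree → Prop
  | .leaf => True
  | .node l r => (l = .leaf ∨ r = .leaf) ∧ l.IsCat ∧ r.IsCat

/-- The list of all subtrees of a tree (each rooted at a node or leaf of the
tree). -/
def BTree.subtrees : BTree → List BTree
  | .leaf => [.leaf]
  | .node l r => .node l r :: (l.subtrees ++ r.subtrees)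

/-- `v j n`: the number of binary trees with `n` internal nodes whose largest
caterpillar subtree has at most `j` internal nodes. -/
noncomputable def v (j n : ℕ) : ℕ :=
  Nat.card {t : BTree // t.size = n ∧ ∀ s ∈ t.subtrees, s.IsCat → s.size ≤ j}

/-!
Call a tree `j`-bounded if all its caterpillar subtrees have size `≤ j`. A node whose children
have sizes summing to `m` is `j`-bounded iff both children are and it is not itself a caterpillar
of size `> j`. If both children are `j`-bounded and the node is a caterpillar, its non-leaf child
is a caterpillar subtree, so `m ≤ j`. Hence gluing two bounded children gives an unbounded tree
exactly when `m = j` and the result is a caterpillar, and there are `2 ^ j` caterpillars of size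
`j + 1` (one side choice per non-bottom level). So
`v j (m + 1) + [m = j] 2 ^ j = ∑_{a + b = m} v j a * v j b`, which is the functional equation
read off coefficientwise.
-/

open Finset PowerSeries

deriving instance DecidableEq for BTree

namespace BTree

instance decidableIsCat : DecidablePred IsCat
  | leaf => isTrue trivial
  | node l r =>
    haveI := decidableIsCat l
    haveI := decidableIsCat r
    inferInstanceAs (Decidable ((l = leaf ∨ r = leaf) ∧ l.IsCat ∧ r.IsCat))

def CatBounded (j : ℕ) (t : BTree) : Prop :=
  ∀ s ∈ t.subtrees, s.IsCat → s.size ≤ j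

instance (j : ℕ) : DecidablePred (CatBounded j) := fun t =>
  inferInstanceAs (Decidable (∀ s ∈ t.subtrees, s.IsCat → s.size ≤ j))

def ofSize : ℕ → Finset BTree
  | 0 => {leaf}
  | n + 1 => (antidiagonal n).attach.biUnion fun p =>
      image₂ node (ofSize p.1.1) (ofSize p.1.2)
decreasing_by exacts [Nat.antidiagonal.fst_lt p.2, Nat.antidiagonal.snd_lt p.2]

theorem mem_ofSize {t : BTree} {n : ℕ} : t ∈ ofSize n ↔ t.size = n := by
  induction t generalizing n with
  | leaf => cases n <;> simp [ofSize, size, eq_comm]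
  | node l r ihl ihr =>
    cases n with
    | zero => simp [ofSize, size]
    | succ m => simp [ofSize, size, ihl, ihr]

theorem mem_subtrees_self (t : BTree) : t ∈ t.subtrees := by
  cases t <;> simp [subtrees]

theorem size_le_of_mem_subtrees {s t : BTree} (h : s ∈ t.subtrees) : s.size ≤ t.size := by
  induction t with
  | leaf => simp_all [subtrees]
  | node l r ihl ihr =>
    simp only [subtrees, List.mem_cons, List.mem_append] at h
    rcases h with rfl | h | h
    · rfl
    · have := ihl h; simp only [size]; omega
    · have := ihr h; simp only [size]; omega

section CatBounded

variable {j : ℕ} {l r t : BTree}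

theorem catBounded_of_size_le (h : t.size ≤ j) : CatBounded j t :=
  fun _ hs _ => (size_le_of_mem_subtrees hs).trans h

theorem catBounded_node_iff :
    CatBounded j (node l r) ↔
      ((node l r).IsCat → l.size + r.size + 1 ≤ j) ∧ CatBounded j l ∧ CatBounded j r := by
  simp only [CatBounded, subtrees, List.forall_mem_cons, List.forall_mem_append, size]

theorem IsCat.size_children_le (hc : (node l r).IsCat) (hl : CatBounded j l)
    (hr : CatBounded j r) : l.size + r.size ≤ j := by
  obtain ⟨rfl | rfl, hcl, hcr⟩ := hc
  · simpa [size] using hr r (mem_subtrees_self r) hcr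
  · simpa [size] using hl l (mem_subtrees_self l) hcl

theorem not_catBounded_node_iff (hl : CatBounded j l) (hr : CatBounded j r) :
    ¬ CatBounded j (node l r) ↔ (node l r).IsCat ∧ l.size + r.size = j := by
  simp only [catBounded_node_iff, hl, hr, and_true, Classical.not_imp, not_le]
  exact and_congr_right fun hc => by have := hc.size_children_le hl hr; omega

end CatBounded

theorem filter_isCat_ofSize_succ (n : ℕ) :
    {t ∈ ofSize (n + 1) | t.IsCat} =
      {s ∈ ofSize n | s.IsCat}.image (node leaf) ∪
        {s ∈ ofSize n | s.IsCat}.image (node · leaf) := by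
  ext t
  cases t with
  | leaf => simp [mem_ofSize, size]
  | node l r =>
    simp only [mem_filter, mem_ofSize, size, IsCat, mem_union, mem_image, node.injEq]
    constructor
    · rintro ⟨h, rfl | rfl, hl, hr⟩
      · exact Or.inl ⟨r, ⟨by simpa [size] using h, hr⟩, rfl, rfl⟩
      · exact Or.inr ⟨l, ⟨by simpa [size] using h, hl⟩, rfl, rfl⟩
    · rintro (⟨s, ⟨h, hs⟩, rfl, rfl⟩ | ⟨s, ⟨h, hs⟩, rfl, rfl⟩)
      · exact ⟨by simpa [size] using h, Or.inl rfl, trivial, hs⟩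
      · exact ⟨by simpa [size] using h, Or.inr rfl, hs, trivial⟩

theorem card_isCat_ofSize_succ (n : ℕ) : #{t ∈ ofSize (n + 1) | t.IsCat} = 2 ^ n := by
  induction n with
  | zero =>
    rw [filter_isCat_ofSize_succ, ofSize, filter_singleton, if_pos (show leaf.IsCat from trivial)]
    simp
  | succ n ih =>
    rw [filter_isCat_ofSize_succ, card_union_of_disjoint, card_image_of_injective,
      card_image_of_injective, ih, pow_succ, mul_two]
    · exact fun _ _ h => (node.inj h).1
    · exact fun _ _ h => (node.inj h).2
    -- the two images meet only in `node leaf leaf`, which has size `1 < n + 2`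
    · simp only [disjoint_left, mem_image, mem_filter, mem_ofSize]
      rintro _ ⟨s, ⟨hs, -⟩, rfl⟩ ⟨s', -, h⟩
      obtain ⟨-, rfl⟩ := node.inj h
      simp [size] at hs

section Counting

variable (j : ℕ)

def catBoundedOfSize (n : ℕ) : Finset BTree := {t ∈ ofSize n | CatBounded j t}

def nodesWithCatBoundedChildren (m : ℕ) : Finset BTree :=
  (antidiagonal m).biUnion fun p => image₂ node (catBoundedOfSize j p.1) (catBoundedOfSize j p.2)

variable {j} {m : ℕ} {t : BTree}

theorem mem_catBoundedOfSize {n : ℕ} :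
    t ∈ catBoundedOfSize j n ↔ t.size = n ∧ CatBounded j t := by
  rw [catBoundedOfSize, mem_filter, mem_ofSize]

theorem mem_nodesWithCatBoundedChildren :
    t ∈ nodesWithCatBoundedChildren j m ↔
      ∃ l r, t = node l r ∧ l.size + r.size = m ∧ CatBounded j l ∧ CatBounded j r := by
  simp only [nodesWithCatBoundedChildren, mem_biUnion, mem_image₂, mem_catBoundedOfSize,
    HasAntidiagonal.mem_antidiagonal, Prod.exists]
  constructor
  · rintro ⟨a, b, hab, l, ⟨rfl, hl⟩, r, ⟨rfl, hr⟩, rfl⟩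
    exact ⟨l, r, rfl, hab, hl, hr⟩
  · rintro ⟨l, r, rfl, hm, hl, hr⟩
    exact ⟨l.size, r.size, hm, l, ⟨rfl, hl⟩, r, ⟨rfl, hr⟩, rfl⟩

theorem card_nodesWithCatBoundedChildren :
    #(nodesWithCatBoundedChildren j m) =
      ∑ p ∈ antidiagonal m, #(catBoundedOfSize j p.1) * #(catBoundedOfSize j p.2) := by
  rw [nodesWithCatBoundedChildren, card_biUnion]
  · exact sum_congr rfl fun p _ => card_image₂ (fun _ _ _ _ => node.inj) _ _
  · rintro ⟨a, b⟩ hab ⟨c, d⟩ hcd hne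
    simp only [Function.onFun, disjoint_left, mem_image₂, mem_catBoundedOfSize]
    rintro _ ⟨l, ⟨rfl, -⟩, r, ⟨rfl, -⟩, rfl⟩ ⟨l', ⟨hl', -⟩, r', -, h⟩
    obtain ⟨rfl, rfl⟩ := node.inj h
    rw [mem_coe, HasAntidiagonal.mem_antidiagonal] at hab hcd
    exact hne (Prod.ext hl' (by dsimp only at hab hcd ⊢; omega))

theorem filter_catBounded_nodesWithCatBoundedChildren :
    {t ∈ nodesWithCatBoundedChildren j m | CatBounded j t} = catBoundedOfSize j (m + 1) := by
  ext t
  rw [mem_filter, mem_nodesWithCatBoundedChildren, mem_catBoundedOfSize]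
  constructor
  · rintro ⟨⟨l, r, rfl, hm, -⟩, h⟩
    exact ⟨by rw [size, hm], h⟩
  · rintro ⟨hsize, h⟩
    cases t with
    | leaf => simp [size] at hsize
    | node l r =>
      obtain ⟨-, hl, hr⟩ := catBounded_node_iff.1 h
      exact ⟨⟨l, r, rfl, by simpa [size] using hsize, hl, hr⟩, h⟩

theorem filter_not_catBounded_nodesWithCatBoundedChildren :
    {t ∈ nodesWithCatBoundedChildren j m | ¬ CatBounded j t} =
      {t ∈ ofSize (m + 1) | t.IsCat ∧ m = j} := by
  ext t
  rw [mem_filter, mem_filter, mem_nodesWithCatBoundedChildren, mem_ofSize]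
  constructor
  · rintro ⟨⟨l, r, rfl, rfl, hl, hr⟩, h⟩
    obtain ⟨hc, hsize⟩ := (not_catBounded_node_iff hl hr).1 h
    exact ⟨rfl, hc, hsize⟩
  · rintro ⟨hsize, hc, rfl⟩
    cases t with
    | leaf => simp [size] at hsize
    | node l r =>
      have hm : l.size + r.size = m := by simpa [size] using hsize
      have hl : CatBounded m l := catBounded_of_size_le (by omega)
      have hr : CatBounded m r := catBounded_of_size_le (by omega)
      exact ⟨⟨l, r, rfl, hm, hl, hr⟩, (not_catBounded_node_iff hl hr).2 ⟨hc, hm⟩⟩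

end Counting

end BTree

open BTree

theorem v_eq_card (j n : ℕ) : v j n = #(catBoundedOfSize j n) := by
  rw [v, ← Nat.card_eq_finsetCard]
  exact Nat.card_congr (Equiv.subtypeEquivRight fun _ => mem_catBoundedOfSize.symm)

theorem v_zero (j : ℕ) : v j 0 = 1 := by
  rw [v_eq_card, catBoundedOfSize, ofSize, filter_singleton,
    if_pos (catBounded_of_size_le (Nat.zero_le _)), card_singleton]

theorem v_succ_add_ite (j m : ℕ) :
    v j (m + 1) + (if m = j then 2 ^ j else 0) = ∑ p ∈ antidiagonal m, v j p.1 * v j p.2 := by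
  simp only [v_eq_card]
  rw [← card_nodesWithCatBoundedChildren,
    ← card_filter_add_card_filter_not (s := nodesWithCatBoundedChildren j m) (CatBounded j),
    filter_catBounded_nodesWithCatBoundedChildren,
    filter_not_catBounded_nodesWithCatBoundedChildren]
  congr 1
  split_ifs with h
  · subst h
    simpa only [and_true] using (card_isCat_ofSize_succ m).symm
  · simp [h]

theorem PowerSeries.mk_eq_one_add_X_mul_sq_sub {R : Type*} [CommRing R] {a : ℕ → R} {c : R}
    {j : ℕ} (h0 : a 0 = 1)
    (hsucc : ∀ m, a (m + 1) + (if m = j then c else 0) =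
      ∑ p ∈ antidiagonal m, a p.1 * a p.2) :
    mk a = 1 + X * mk a ^ 2 - c • X ^ (j + 1) := by
  ext n
  cases n with
  | zero => simp [h0]
  | succ m =>
    rw [map_sub, map_add, coeff_succ_X_mul, sq, coeff_mul]
    simp only [coeff_mk, ← hsucc m, coeff_one, coeff_smul, coeff_X_pow]
    split_ifs <;> simp_all

open PowerSeries in
theorem gf_caterpillar_bound_general (j : ℕ) :
    (PowerSeries.mk fun n => (v j n : ℚ)) =
      1 + X * (PowerSeries.mk fun n => (v j n : ℚ)) ^ 2
        - ((2 : ℚ) ^ j) • X ^ (j + 1) := by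
  refine mk_eq_one_add_X_mul_sq_sub (by simp [v_zero]) fun m => ?_
  exact_mod_cast v_succ_add_ite j m

open PowerSeries in
/-- The generating function `P_j(x) = Σ_n v_{j,n} xⁿ` satisfies
`P_j = 1 + x P_j² − 2^j x^{j+1}`. -/
theorem gf_caterpillar_bound (j : ℕ) (hj : 1 ≤ j) :
    (PowerSeries.mk fun n => (v j n : ℚ)) =
      1 + X * (PowerSeries.mk fun n => (v j n : ℚ)) ^ 2
        - ((2 : ℚ) ^ j) • X ^ (j + 1) :=
  gf_caterpillar_bound_general j
end

section
/- For each j ≥ 1, the polynomial 1 − 4x + 2^{j+2} x^{j+2} has a root ρ_j in the open interval (1/4, 2/5), and this is its smallest positive root. -/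
/-!
With `f x = 1 - 4x + (2x)ⁿ` and `n = j + 2 ≥ 3`: `f (1/4) = 2⁻ⁿ > 0` and
`f (2/5) = (4/5)ⁿ - 3/5 < 0`, so `f` has a least zero `ρ` in `[1/4, 2/5]` (the zero set
there is compact and nonempty), necessarily in the open interval. A positive root below `ρ`
would lie in `(0, 1/4]`, where `1 - 4x ≥ 0` makes `f` positive.
-/

open Set

theorem exists_isLeast_zero_of_pos_of_neg {f : ℝ → ℝ} {a b : ℝ} (hab : a ≤ b)
    (hf : ContinuousOn f (Icc a b)) (ha : 0 < f a) (hb : f b < 0) :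
    ∃ ρ ∈ Ioo a b, IsLeast (Icc a b ∩ f ⁻¹' {0}) ρ := by
  obtain ⟨x₀, hx₀, hfx₀⟩ := intermediate_value_Icc' hab hf ⟨hb.le, ha.le⟩
  have hcompact : IsCompact (Icc a b ∩ f ⁻¹' {0}) :=
    isCompact_Icc.of_isClosed_subset (hf.preimage_isClosed_of_isClosed isClosed_Icc
      isClosed_singleton) inter_subset_left
  obtain ⟨ρ, hρ⟩ := hcompact.exists_isLeast ⟨x₀, hx₀, hfx₀⟩
  obtain ⟨⟨hρa, hρb⟩, hfρ⟩ := hρ.1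
  have hρa' : ρ ≠ a := by rintro rfl; exact ha.ne' hfρ
  have hρb' : ρ ≠ b := by rintro rfl; exact hb.ne hfρ
  exact ⟨ρ, ⟨lt_of_le_of_ne hρa hρa'.symm, lt_of_le_of_ne hρb hρb'⟩, hρ⟩

def trinomialFun (n : ℕ) (x : ℝ) : ℝ := 1 - 4 * x + 2 ^ n * x ^ n

theorem continuous_trinomialFun (n : ℕ) : Continuous (trinomialFun n) := by
  unfold trinomialFun; fun_prop

theorem trinomialFun_pos (n : ℕ) {x : ℝ} (hx : 0 < x) (hx' : x ≤ 1 / 4) :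
    0 < trinomialFun n x := by
  have : 0 < 2 ^ n * x ^ n := by positivity
  unfold trinomialFun; linarith

theorem trinomialFun_two_fifths_neg {n : ℕ} (hn : 3 ≤ n) : trinomialFun n (2 / 5) < 0 := by
  have hpow : (4 / 5 : ℝ) ^ n ≤ (4 / 5) ^ 3 := pow_le_pow_of_le_one (by norm_num) (by norm_num) hn
  have : trinomialFun n (2 / 5) = (4 / 5) ^ n - 3 / 5 := by
    rw [trinomialFun, ← mul_pow]; norm_num; ring
  rw [this]; linarith [show (4 / 5 : ℝ) ^ 3 < 3 / 5 by norm_num]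

/-- For each `j ≥ 1`, the polynomial `1 − 4x + 2^{j+2} x^{j+2}` has a root
`ρ_j ∈ (1/4, 2/5)`, and this root is its smallest positive root. -/
theorem smallest_positive_root (j : ℕ) (hj : 1 ≤ j) :
    ∃ ρ : ℝ, ρ ∈ Set.Ioo (1/4 : ℝ) (2/5 : ℝ) ∧
      1 - 4 * ρ + 2 ^ (j + 2) * ρ ^ (j + 2) = 0 ∧
      ∀ x : ℝ, 0 < x → 1 - 4 * x + 2 ^ (j + 2) * x ^ (j + 2) = 0 → ρ ≤ x := by
  obtain ⟨ρ, hρ, ⟨-, hρ0⟩, hleast⟩ :=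
    exists_isLeast_zero_of_pos_of_neg (by norm_num) (continuous_trinomialFun (j + 2)).continuousOn
      (trinomialFun_pos _ (by norm_num) le_rfl) (trinomialFun_two_fifths_neg (by omega))
  refine ⟨ρ, hρ, hρ0, fun x hx hx0 => ?_⟩
  rcases le_or_gt x (1 / 4) with hx4 | hx4
  · exact absurd hx0 (trinomialFun_pos _ hx hx4).ne'
  rcases le_or_gt x (2 / 5) with hx5 | hx5
  · exact hleast ⟨⟨hx4.le, hx5⟩, hx0⟩
  · exact (hρ.2.trans hx5).le
end

section
/- Let m ≥ 0 and j = 2m+1. The generating function L_j(x) = (sqrt(1 − 4x + 4c_m x^{j+1}) − sqrt(1 − 4x))/(2x), where c_m is the m-th Catalan number, satisfies the equation L_j = c_m x^j + x L_j² + 2x L_j (C − L_j), where C(x) = (1 − sqrt(1−4x))/(2x) is the Catalan generating function. -/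
/-!
Put `D = S₁ - S₂ = 2xL`. Since `S₁ + S₂ = D + 2 - 4x·Cat`, the difference of squares
`S₁² - S₂² = 4c_m x^{2m+2}` reads `2xL (2xL + 2 - 4x·Cat) = 4x · c_m x^{2m+1}`; cancelling `4x`
in a domain where `2 ≠ 0` leaves `L (1 + xL - 2x·Cat) = c_m x^{2m+1}`, which is the equation.
-/

theorem eq_add_mul_sq_add_of_sq_sub_sq {R : Type*} [CommRing R] [IsDomain R] [NeZero (2 : R)]
    {x a L Cat s₁ s₂ : R} (hx : x ≠ 0) (hs : s₁ ^ 2 - s₂ ^ 2 = 4 * x * a)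
    (hL : 2 * x * L = s₁ - s₂) (hC : 2 * x * Cat = 1 - s₂) :
    L = a + x * L ^ 2 + 2 * x * L * (Cat - L) := by
  have h2x : (2 : R) * x ≠ 0 := mul_ne_zero two_ne_zero hx
  have key : 2 * x * (2 * L) = 2 * x * (2 * (a + x * L ^ 2 + 2 * x * L * (Cat - L))) := by
    linear_combination hs + (s₁ + s₂ + 2 * x * L) * hL - 4 * x * L * hC
  exact mul_left_cancel₀ two_ne_zero (mul_left_cancel₀ h2x key)

open PowerSeries in
theorem Lj_satisfies_equation_general (m : ℕ) (S₁ S₂ L Cat : PowerSeries ℚ)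
    (hS₁ : S₁ ^ 2 = 1 - 4 * X + (4 * (catalan m : ℚ)) • X ^ (2 * m + 2))
    (hS₂ : S₂ ^ 2 = 1 - 4 * X)
    (hL : (2 : ℚ) • (X * L) = S₁ - S₂)
    (hC : (2 : ℚ) • (X * Cat) = 1 - S₂) :
    L = (catalan m : ℚ) • X ^ (2 * m + 1) + X * L ^ 2 + 2 * X * L * (Cat - L) := by
  have : CharZero ℚ⟦X⟧ := charZero_of_injective_algebraMap (algebraMap ℚ _).injective
  simp only [Algebra.smul_def, map_mul, map_ofNat] at hS₁ hL hC ⊢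
  rw [← mul_assoc] at hL hC
  refine eq_add_mul_sq_add_of_sq_sub_sq X_ne_zero ?_ hL hC
  rw [hS₁, hS₂]
  ring

open PowerSeries in
/-- Let `m ≥ 0`, `j = 2m+1`.  The generating function
`L_j(x) = (sqrt(1 − 4x + 4c_m x^{j+1}) − sqrt(1 − 4x))/(2x)` satisfies
`L_j = c_m x^j + x L_j² + 2x L_j (C − L_j)`, where
`C(x) = (1 − sqrt(1 − 4x))/(2x)` is the Catalan generating function.
Here `S₁` (resp. `S₂`) is the formal square root with constant term `1` of
`1 − 4x + 4c_m x^{j+1}` (resp. `1 − 4x`), `L` satisfies `2x·L = S₁ − S₂`, and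
`Cat` satisfies `2x·Cat = 1 − S₂`. -/
theorem Lj_satisfies_equation (m : ℕ) (S₁ S₂ L Cat : PowerSeries ℚ)
    (hS₁0 : S₁.coeff 0 = 1)
    (hS₁ : S₁ ^ 2 = 1 - 4 * X + (4 * (catalan m : ℚ)) • X ^ (2 * m + 2))
    (hS₂0 : S₂.coeff 0 = 1)
    (hS₂ : S₂ ^ 2 = 1 - 4 * X)
    (hL : (2 : ℚ) • (X * L) = S₁ - S₂)
    (hC : (2 : ℚ) • (X * Cat) = 1 - S₂) :
    L = (catalan m : ℚ) • X ^ (2 * m + 1) + X * L ^ 2 + 2 * X * L * (Cat - L) :=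
  Lj_satisfies_equation_general m S₁ S₂ L Cat hS₁ hS₂ hL hC
end

section
/- The number of strictly binary trees with 2m+1 internal nodes equals the m-th Catalan number c_m. -/
/-- A tree is strictly binary if, after removing all leaves, every remaining
node has outdegree `0` or `2`; equivalently, at every internal node either both
children are leaves or both are internal. -/
def BTree.IsStrict : BTree → Prop
  | .leaf => True
  | .node l r => ((l = .leaf) ↔ (r = .leaf)) ∧ l.IsStrict ∧ r.IsStrict

/-
Replacing every leaf of a tree by a cherry (an internal node with two leaf children) turns a tree
with `m` internal nodes into a strictly binary tree with `2m + 1` internal nodes: the `m + 1`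
leaves become internal. Conversely, deleting all leaves of a strictly binary tree with at least
one internal node undoes this, so the map is a bijection onto strictly binary trees of size
`2m + 1`, and these are counted by the Catalan number `c_m` just as binary trees of size `m` are.
-/

namespace BTree

def toBinaryTree : BTree → BinaryTree Unit
  | .leaf => .nil
  | .node l r => .node () l.toBinaryTree r.toBinaryTree

def ofBinaryTree : BinaryTree Unit → BTree
  | .nil => .leaf
  | .node _ l r => .node (ofBinaryTree l) (ofBinaryTree r)

def equivBinaryTree : BTree ≃ BinaryTree Unit where
  toFun := toBinaryTree
  invFun := ofBinaryTree
  left_inv t := by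
    induction t with
    | leaf => rfl
    | node l r hl hr => simp [toBinaryTree, ofBinaryTree, hl, hr]
  right_inv t := by
    induction t with
    | nil => rfl
    | node _ l r hl hr => simp [toBinaryTree, ofBinaryTree, hl, hr]

@[simp]
lemma numNodes_equivBinaryTree (t : BTree) : (equivBinaryTree t).numNodes = t.size := by
  induction t with
  | leaf => rfl
  | node l r hl hr => exact congr($hl + $hr + 1)

lemma card_size_eq (m : ℕ) : Nat.card {t : BTree // t.size = m} = catalan m := by
  calc Nat.card {t : BTree // t.size = m}
      = Nat.card (BinaryTree.treesOfNumNodesEq m) :=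
        Nat.card_congr (equivBinaryTree.subtypeEquiv fun t => by simp)
    _ = catalan m := by
        rw [Nat.card_eq_finsetCard, BinaryTree.treesOfNumNodesEq_card_eq_catalan]

def sprout : BTree → BTree
  | .leaf => .node .leaf .leaf
  | .node l r => .node l.sprout r.sprout

lemma sprout_ne_leaf (t : BTree) : t.sprout ≠ .leaf := by
  cases t <;> simp [sprout]

lemma size_sprout (t : BTree) : t.sprout.size = 2 * t.size + 1 := by
  induction t with
  | leaf => rfl
  | node l r hl hr => simp only [sprout, size, hl, hr]; ring

lemma isStrict_sprout (t : BTree) : t.sprout.IsStrict := by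
  induction t with
  | leaf => exact ⟨Iff.rfl, trivial, trivial⟩
  | node l r hl hr => exact ⟨by simp [sprout_ne_leaf], hl, hr⟩

lemma sprout_injective : Function.Injective sprout := by
  intro a
  induction a with
  | leaf =>
    rintro (_ | ⟨l, r⟩) h
    · rfl
    · exact absurd (node.inj h).1.symm (sprout_ne_leaf l)
  | node l r hl hr =>
    rintro (_ | ⟨l', r'⟩) h
    · exact absurd (node.inj h).1 (sprout_ne_leaf l)
    · obtain ⟨hl', hr'⟩ := node.inj h
      rw [hl hl', hr hr']

lemma exists_sprout_eq {t : BTree} (hs : t.IsStrict) (ht : t ≠ .leaf) :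
    ∃ u : BTree, u.sprout = t := by
  induction t with
  | leaf => exact absurd rfl ht
  | node l r hl hr =>
    obtain ⟨hiff, hsl, hsr⟩ := hs
    by_cases h : l = .leaf
    · exact ⟨.leaf, by rw [h, hiff.mp h]; rfl⟩
    · obtain ⟨a, rfl⟩ := hl hsl h
      obtain ⟨b, rfl⟩ := hr hsr (mt hiff.mpr h)
      exact ⟨.node a b, rfl⟩

noncomputable def sproutEquiv (m : ℕ) :
    {t : BTree // t.size = m} ≃ {t : BTree // t.size = 2 * m + 1 ∧ t.IsStrict} :=
  Equiv.ofBijective (fun u => ⟨u.1.sprout, by rw [size_sprout, u.2], isStrict_sprout u.1⟩) <| by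
    refine ⟨fun a b h => Subtype.ext (sprout_injective (congrArg Subtype.val h)), ?_⟩
    rintro ⟨t, ht, hs⟩
    obtain ⟨u, rfl⟩ := exists_sprout_eq hs (by rintro rfl; simp [size] at ht)
    rw [size_sprout] at ht
    exact ⟨⟨u, by omega⟩, rfl⟩

end BTree

/-- The number of strictly binary trees with `2m+1` internal nodes is the
`m`-th Catalan number. -/
theorem card_strictly_binary (m : ℕ) :
    Nat.card {t : BTree // t.size = 2 * m + 1 ∧ t.IsStrict} = catalan m := by
  rw [← Nat.card_congr (BTree.sproutEquiv m), BTree.card_size_eq]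
end

section
/- For n ≥ 3, the number of permutations in Av_n(123) that contain an increasing sub-permutation of size 2 equals a_n = 3·(2n−4)!/((n−3)!·n!), and the number whose largest increasing sub-permutation has size 1 is c_n − a_n, where c_n is the n-th Catalan number. -/
/-- Rescaling: replace each entry of a duplicate-free list by its rank, giving a
permutation of `{1,...,length}` with the same relative order. -/
def rescale (s : List ℕ) : List ℕ :=
  s.map (fun x => (s.filter (fun y => decide (y ≤ x))).length)

/-- `l` is (the one-line notation of) a permutation of `{1,...,n}`. -/
def IsPermList (n : ℕ) (l : List ℕ) : Prop := l.Perm (List.range' 1 n)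

/-- `l` contains the pattern `σ`: some subsequence of `l` is order-isomorphic
to `σ`. -/
def ContainsPat (σ l : List ℕ) : Prop := ∃ t, t.Sublist l ∧ rescale t = σ

/-- `l` avoids the pattern `σ`. -/
def AvoidsPat (σ l : List ℕ) : Prop := ¬ ContainsPat σ l

/-- `s` is the substring `s_l(k)` of `l` generated by the entry `k`: the longest
contiguous substring of `l` containing `k` all of whose entries are `≥ k`.
The sub-permutation `g_l(k)` generated by `k` is then `rescale s`. -/
def IsGenSub (l : List ℕ) (k : ℕ) (s : List ℕ) : Prop :=
  s <:+: l ∧ k ∈ s ∧ (∀ x ∈ s, k ≤ x) ∧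
    ∀ t : List ℕ, t <:+: l → k ∈ t → (∀ x ∈ t, k ≤ x) → t.length ≤ s.length

/-!
Deleting the maximum `m + 1` from a `123`-avoider leaves a `123`-avoider, and the entries before
it must decrease weakly (otherwise they would form a `123` with it). Conversely, `m + 1` can be
inserted into a `123`-avoider `τ` of size `m` at any position `i` up to the length `d(τ)` of the
initial weakly decreasing run of `τ` (`descPrefixLength`). The resulting permutation has initial
run of length `i`, or `d(τ) + 1` when `i = 0`. So `F(m, j) = descCount m j`, the number of
avoiders of size `m` with `d ≥ j`, satisfies the ballot recursion
`F(m + 1, j + 1) = F(m + 1, j + 2) + F(m, j)`. Its solution is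
`F(m, j) = (j + 1) (2m - j)! / ((m - j)! (m + 1)!)`, and `F(m, 0)` is the Catalan number.

An increasing generated substring of size two can only be `[π₁, π₂]` with `π₃ < π₁ < π₂`, and then
`π₂` is the maximum `n`. Deleting it gives exactly the avoiders of size `n - 1` with `d ≥ 2`, so
these permutations number `F(n - 1, 2)`.
-/

open List

open scoped Classical

def Avoids123 (l : List ℕ) : Prop := ∀ a b c, [a, b, c] <+ l → a < b → b < c → False

theorem rescale_eq_123_iff {t : List ℕ} :
    rescale t = [1, 2, 3] ↔ ∃ a b c, t = [a, b, c] ∧ a < b ∧ b < c := by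
  constructor
  · intro h
    have hlen : t.length = 3 := by simpa [rescale] using congrArg length h
    obtain ⟨a, b, c, rfl⟩ : ∃ a b c, t = [a, b, c] := by
      match t, hlen with
      | [a, b, c], _ => exact ⟨a, b, c, rfl⟩
    simp only [rescale, map_cons, map_nil, ← countP_eq_length_filter, countP_cons, countP_nil,
      decide_eq_true_eq, le_refl, if_true, cons.injEq, and_true] at h
    refine ⟨a, b, c, rfl, ?_, ?_⟩ <;> obtain ⟨h1, h2, h3⟩ := h <;> split_ifs at h1 h2 h3 <;> omega
  · rintro ⟨a, b, c, rfl, hab, hbc⟩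
    simp only [rescale, map_cons, map_nil, ← countP_eq_length_filter, countP_cons, countP_nil,
      decide_eq_true_eq, le_refl, if_true, cons.injEq, and_true]
    split_ifs <;> omega

theorem avoidsPat_123_iff {l : List ℕ} : AvoidsPat [1, 2, 3] l ↔ Avoids123 l := by
  simp only [AvoidsPat, ContainsPat, rescale_eq_123_iff, Avoids123]
  constructor
  · exact fun h a b c hs hab hbc => h ⟨_, hs, a, b, c, rfl, hab, hbc⟩
  · rintro h ⟨_, hs, a, b, c, rfl, hab, hbc⟩
    exact h a b c hs hab hbc

theorem Avoids123.sublist {l l' : List ℕ} (h : Avoids123 l) (hs : l' <+ l) : Avoids123 l' :=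
  fun a b c habc => h a b c (habc.trans hs)

theorem Avoids123.length_le_two {l s : List ℕ} (h : Avoids123 l) (hs : s <+ l)
    (hc : s.IsChain (· < ·)) : s.length ≤ 2 := by
  match s, hc with
  | [], _ | [_], _ | [_, _], _ => simp
  | a :: b :: c :: t, hc =>
    simp only [isChain_cons_cons] at hc
    have habc : [a, b, c] <+ l :=
      ((nil_sublist t).cons_cons c |>.cons_cons b |>.cons_cons a).trans hs
    exact (h a b c habc hc.1 hc.2.1).elim

theorem avoids123_of_pairwise_ge {l : List ℕ} (h : l.Pairwise (· ≥ ·)) : Avoids123 l :=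
  fun a b _ hs hab _ => by
    have := pairwise_iff_forall_sublist.1 h ((by simp : [a, b] <+ [a, b, _]).trans hs)
    omega

theorem Avoids123.append_cons {u v : List ℕ} {M : ℕ} (h : Avoids123 (u ++ v))
    (hu : u.Pairwise (· ≥ ·)) (hv : ∀ x ∈ v, x < M) : Avoids123 (u ++ M :: v) := by
  intro x y z hs hxy hyz
  obtain ⟨l₁, l₂, he, h₁, h₂⟩ := sublist_append_iff.1 hs
  rcases sublist_cons_iff.1 h₂ with h₂ | ⟨r, rfl, hr⟩
  · exact h x y z (he ▸ h₁.append h₂) hxy hyz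
  rcases l₁ with _ | ⟨x₁, _ | ⟨x₂, _ | ⟨x₃, l₁⟩⟩⟩ <;>
    simp only [nil_append, cons_append, cons.injEq, nil_eq, append_eq_nil_iff,
      reduceCtorEq, and_false] at he
  · have := hv y (hr.subset (by simp [← he.2])); omega
  · have := hv z (hr.subset (by simp [← he.2.2])); omega
  · obtain ⟨rfl, rfl, -⟩ := he
    have := pairwise_iff_forall_sublist.1 hu h₁; omega

def descPrefixLength : List ℕ → ℕ
  | [] => 0
  | [_] => 1
  | a :: b :: l => if b ≤ a then descPrefixLength (b :: l) + 1 else 1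

theorem le_descPrefixLength_iff {l : List ℕ} {j : ℕ} :
    j ≤ descPrefixLength l ↔ j ≤ l.length ∧ (l.take j).IsChain (· ≥ ·) := by
  induction l generalizing j with
  | nil => simp [descPrefixLength]
  | cons a l ih =>
    cases j with
    | zero => simp
    | succ j =>
      rw [take_succ_cons, isChain_cons]
      cases l with
      | nil => simp [descPrefixLength]
      | cons b l =>
        simp only [descPrefixLength]
        split_ifs with hba
        · rw [add_le_add_iff_right, ih]
          cases j <;> simp [hba]
        · cases j <;> simp [hba]

theorem descPrefixLength_le_length (l : List ℕ) : descPrefixLength l ≤ l.length :=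
  (le_descPrefixLength_iff.1 le_rfl).1

theorem le_descPrefixLength_append {u : List ℕ} (v : List ℕ) (hu : u.IsChain (· ≥ ·)) :
    u.length ≤ descPrefixLength (u ++ v) :=
  le_descPrefixLength_iff.2 ⟨by simp, by rwa [take_left]⟩

theorem descPrefixLength_append_cons {u v : List ℕ} {b : ℕ} (hu : u ≠ [])
    (hc : u.IsChain (· ≥ ·)) (hb : ∀ x ∈ u, x < b) :
    descPrefixLength (u ++ b :: v) = u.length := by
  refine le_antisymm (not_lt.1 fun hlt => ?_) (le_descPrefixLength_append _ hc)
  have hch := (le_descPrefixLength_iff.1 hlt).2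
  rw [← singleton_append, ← append_assoc, take_left' (by simp), isChain_append] at hch
  have := hb _ (getLast_mem hu)
  have := hch.2.2 _ (getLast?_eq_some_getLast hu) b rfl
  omega

theorem descPrefixLength_cons_of_le {a : ℕ} {l : List ℕ} (h : ∀ b ∈ l.head?, b ≤ a) :
    descPrefixLength (a :: l) = descPrefixLength l + 1 := by
  cases l with
  | nil => rfl
  | cons b l => simp [descPrefixLength, h b rfl]

theorem two_le_descPrefixLength_cons_cons {a b : ℕ} {l : List ℕ} :
    2 ≤ descPrefixLength (a :: b :: l) ↔ b ≤ a := by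
  simp [le_descPrefixLength_iff]

noncomputable def av123 (m : ℕ) : Finset (List ℕ) :=
  (range' 1 m).permutations.toFinset.filter Avoids123

section av123

variable {m : ℕ} {l u v : List ℕ}

theorem mem_av123 : l ∈ av123 m ↔ l ~ range' 1 m ∧ Avoids123 l := by
  simp [av123, mem_permutations]

theorem natCard_eq_card_filter_av123 (n : ℕ) (Q : List ℕ → Prop) :
    Nat.card {l : List ℕ // IsPermList n l ∧ AvoidsPat [1, 2, 3] l ∧ Q l} =
      ((av123 n).filter Q).card := by
  rw [← Nat.card_eq_finsetCard]
  exact Nat.card_congr <| Equiv.subtypeEquivRight fun l => by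
    simp [mem_av123, IsPermList, avoidsPat_123_iff, and_assoc]

theorem length_of_mem_av123 (hl : l ∈ av123 m) : l.length = m := by
  simpa using (mem_av123.1 hl).1.length_eq

theorem nodup_of_mem_av123 (hl : l ∈ av123 m) : l.Nodup :=
  (mem_av123.1 hl).1.nodup_iff.2 nodup_range'

theorem mem_iff_of_mem_av123 (hl : l ∈ av123 m) {x : ℕ} : x ∈ l ↔ 1 ≤ x ∧ x ≤ m := by
  rw [(mem_av123.1 hl).1.mem_iff, mem_range'_1]
  omega

theorem append_cons_perm_range'_succ_iff :
    u ++ (m + 1) :: v ~ range' 1 (m + 1) ↔ u ++ v ~ range' 1 m := by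
  have : range' 1 (m + 1) ~ (m + 1) :: range' 1 m := by
    rw [range'_concat, Nat.add_comm 1, Nat.one_mul]
    exact perm_append_singleton _ _
  exact ⟨fun h => (perm_cons _).1 (perm_middle.symm.trans (h.trans this)),
    fun h => perm_middle.trans (((perm_cons _).2 h).trans this.symm)⟩

theorem append_cons_mem_av123_succ_iff :
    u ++ (m + 1) :: v ∈ av123 (m + 1) ↔ u ++ v ∈ av123 m ∧ u.IsChain (· ≥ ·) := by
  rw [isChain_iff_pairwise]
  constructor
  · intro h
    obtain ⟨hp, ha⟩ := mem_av123.1 h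
    have huv : u ++ v ∈ av123 m := mem_av123.2
      ⟨append_cons_perm_range'_succ_iff.1 hp, ha.sublist ((sublist_cons_self _ v).append_left u)⟩
    refine ⟨huv, pairwise_iff_forall_sublist.2 fun {x y} hxy => not_lt.1 fun hlt => ?_⟩
    have := (mem_iff_of_mem_av123 huv (x := y)).1 (mem_append_left v (hxy.subset (by simp)))
    exact ha x y (m + 1) (hxy.append ((nil_sublist v).cons_cons _)) hlt (by omega)
  · rintro ⟨huv, hu⟩
    obtain ⟨hp, ha⟩ := mem_av123.1 huv
    refine mem_av123.2 ⟨append_cons_perm_range'_succ_iff.2 hp, ha.append_cons hu fun x hx => ?_⟩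
    have := (mem_iff_of_mem_av123 huv).1 (mem_append_right u hx)
    omega

theorem exists_eq_append_cons_of_mem_av123_succ {σ : List ℕ} (hσ : σ ∈ av123 (m + 1)) :
    ∃ u v, σ = u ++ (m + 1) :: v ∧ u ++ v ∈ av123 m ∧ u.IsChain (· ≥ ·) := by
  obtain ⟨u, v, rfl⟩ := append_of_mem ((mem_iff_of_mem_av123 hσ).2 ⟨by omega, le_rfl⟩)
  exact ⟨u, v, rfl, append_cons_mem_av123_succ_iff.1 hσ⟩

theorem succ_notMem_of_append_mem_av123 (h : u ++ v ∈ av123 m) : m + 1 ∉ u := fun hu => by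
  have := (mem_iff_of_mem_av123 h).1 (mem_append_left v hu)
  omega

end av123

noncomputable def descCount (m j : ℕ) : ℕ :=
  ((av123 m).filter (j ≤ descPrefixLength ·)).card

section descCount

variable {m : ℕ}

theorem card_filter_idxOf_succ (i : ℕ) (P : List ℕ → Prop) [DecidablePred P] :
    ((av123 (m + 1)).filter fun σ => σ.idxOf (m + 1) = i ∧ P (σ.erase (m + 1))).card =
      ((av123 m).filter fun τ => i ≤ descPrefixLength τ ∧ P τ).card := by
  refine Finset.card_nbij' (·.erase (m + 1)) (fun τ => τ.take i ++ (m + 1) :: τ.drop i)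
    ?_ ?_ ?_ ?_
  · intro σ hσ
    simp only [Finset.coe_filter, Set.mem_ofPred_eq] at hσ ⊢
    obtain ⟨hσ, rfl, hP⟩ := hσ
    obtain ⟨u, v, rfl, huv, hu⟩ := exists_eq_append_cons_of_mem_av123_succ hσ
    have hM := succ_notMem_of_append_mem_av123 huv
    simp only [idxOf_append_of_notMem hM, erase_append_right _ hM, erase_cons_head,
      idxOf_cons_self, add_zero] at hP ⊢
    exact ⟨huv, le_descPrefixLength_append v hu, hP⟩
  · intro τ hτ
    simp only [Finset.coe_filter, Set.mem_ofPred_eq] at hτ ⊢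
    obtain ⟨hτ, hi, hP⟩ := hτ
    rw [← take_append_drop i τ] at hτ
    have hM := succ_notMem_of_append_mem_av123 hτ
    have hi' : i ≤ τ.length := hi.trans (descPrefixLength_le_length τ)
    simp only [idxOf_append_of_notMem hM, erase_append_right _ hM, erase_cons_head,
      idxOf_cons_self, add_zero, length_take, take_append_drop, min_eq_left hi']
    exact ⟨append_cons_mem_av123_succ_iff.2 ⟨hτ, (le_descPrefixLength_iff.1 hi).2⟩, trivial, hP⟩
  · intro σ hσ
    simp only [Finset.coe_filter, Set.mem_ofPred_eq] at hσ
    obtain ⟨hσ, rfl, -⟩ := hσ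
    obtain ⟨u, v, rfl, huv, -⟩ := exists_eq_append_cons_of_mem_av123_succ hσ
    have hM := succ_notMem_of_append_mem_av123 huv
    simp [idxOf_append_of_notMem hM, erase_append_right _ hM]
  · intro τ hτ
    simp only [Finset.coe_filter, Set.mem_ofPred_eq] at hτ
    rw [← take_append_drop i τ] at hτ
    have hM := succ_notMem_of_append_mem_av123 hτ.1
    simp [erase_append_right _ hM]

theorem descPrefixLength_eq_of_mem_av123_succ {σ : List ℕ} (hσ : σ ∈ av123 (m + 1)) :
    descPrefixLength σ = if σ.idxOf (m + 1) = 0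
      then descPrefixLength (σ.erase (m + 1)) + 1 else σ.idxOf (m + 1) := by
  obtain ⟨u, v, rfl, huv, hu⟩ := exists_eq_append_cons_of_mem_av123_succ hσ
  have hM := succ_notMem_of_append_mem_av123 huv
  have hlt : ∀ x ∈ u ++ v, x < m + 1 := fun x hx => by
    have := (mem_iff_of_mem_av123 huv).1 hx
    omega
  simp only [idxOf_append_of_notMem hM, erase_append_right _ hM, erase_cons_head,
    idxOf_cons_self, add_zero, length_eq_zero_iff]
  split_ifs with h
  · subst h
    exact descPrefixLength_cons_of_le fun b hb => (hlt b (by simp [mem_of_mem_head? hb])).le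
  · exact descPrefixLength_append_cons h hu fun x hx => hlt x (mem_append_left v hx)

theorem descCount_eq_add_card_filter_eq (j : ℕ) :
    descCount m j =
      descCount m (j + 1) + ((av123 m).filter (descPrefixLength · = j)).card := by
  rw [descCount, ← Finset.card_filter_add_card_filter_not (j + 1 ≤ descPrefixLength ·),
    Finset.filter_filter, Finset.filter_filter, descCount]
  congr 2 <;> exact Finset.filter_congr fun l _ => by omega

theorem card_filter_descPrefixLength_eq_succ (j : ℕ) :
    ((av123 (m + 1)).filter (descPrefixLength · = j + 1)).card = descCount m j := by
  rw [← Finset.card_filter_add_card_filter_not (·.idxOf (m + 1) = 0), Finset.filter_filter,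
    Finset.filter_filter, descCount_eq_add_card_filter_eq j, add_comm (descCount m _)]
  congr 1
  · calc _ = ((av123 (m + 1)).filter fun σ =>
            σ.idxOf (m + 1) = 0 ∧ descPrefixLength (σ.erase (m + 1)) = j).card :=
          congrArg _ <| Finset.filter_congr fun σ hσ => by
            rw [descPrefixLength_eq_of_mem_av123_succ hσ]
            split_ifs with h <;> simp [h]
      _ = _ := by rw [card_filter_idxOf_succ 0 (descPrefixLength · = j)]; simp
  · calc _ = ((av123 (m + 1)).filter fun σ => σ.idxOf (m + 1) = j + 1 ∧ True).card :=
          congrArg _ <| Finset.filter_congr fun σ hσ => by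
            rw [descPrefixLength_eq_of_mem_av123_succ hσ]
            split_ifs with h <;> simp [h]
      _ = _ := by rw [card_filter_idxOf_succ (P := fun _ => True)]; simp [descCount]

theorem descCount_succ_succ (j : ℕ) :
    descCount (m + 1) (j + 1) = descCount (m + 1) (j + 2) + descCount m j := by
  rw [descCount_eq_add_card_filter_eq, card_filter_descPrefixLength_eq_succ]

theorem descCount_zero_eq_descCount_one (hm : m ≠ 0) : descCount m 0 = descCount m 1 := by
  rw [descCount, descCount]
  refine congrArg _ (Finset.filter_congr fun l hl => ?_)
  obtain ⟨a, l, rfl⟩ := exists_cons_of_ne_nil (ne_nil_of_length_pos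
    ((length_of_mem_av123 hl).symm ▸ Nat.pos_of_ne_zero hm))
  simp [le_descPrefixLength_iff]

theorem descCount_self (m : ℕ) : descCount m m = 1 := by
  have hdesc : (range' 1 m).reverse.Pairwise (· ≥ ·) :=
    pairwise_reverse.2 ((pairwise_lt_range' (s := 1) (n := m)).imp le_of_lt)
  rw [descCount, Finset.card_eq_one]
  refine ⟨(range' 1 m).reverse, Finset.eq_singleton_iff_unique_mem.2 ⟨?_, fun l hl => ?_⟩⟩
  · refine Finset.mem_filter.2 ⟨mem_av123.2 ⟨reverse_perm _, avoids123_of_pairwise_ge hdesc⟩, ?_⟩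
    simpa using le_descPrefixLength_append [] (isChain_iff_pairwise.2 hdesc)
  · obtain ⟨hl, hm⟩ := Finset.mem_filter.1 hl
    have hch := (le_descPrefixLength_iff.1 hm).2
    rw [take_of_length_le (length_of_mem_av123 hl).le] at hch
    exact Perm.eq_of_pairwise' (isChain_iff_pairwise.1 hch) hdesc
      ((mem_av123.1 hl).1.trans (reverse_perm _).symm)

end descCount

open Nat in
theorem descCount_mul_factorial (j k : ℕ) :
    descCount (j + k) j * (k ! * (j + k + 1)!) = (j + 1) * (j + 2 * k)! := by
  induction k generalizing j with
  | zero => simp [descCount_self, factorial_succ]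
  | succ k ihk =>
    induction j with
    | zero =>
      have h := ihk 1
      rw [add_comm 1 k, add_comm 1 (2 * k)] at h
      simp only [zero_add]
      rw [descCount_zero_eq_descCount_one (by omega),
        show 2 * (k + 1) = 2 * k + 1 + 1 by ring, factorial_succ (2 * k + 1), factorial_succ k]
      linear_combination (k + 1) * h
    | succ j ihj =>
      have h := ihk (j + 2)
      rw [show j + 2 + k = j + k + 1 + 1 by ring, show j + k + 1 + 1 + 1 = j + k + 2 + 1 by ring,
        factorial_succ (j + k + 2), show j + 2 + 2 * k = j + 2 * k + 2 by ring] at h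
      rw [show j + (k + 1) = j + k + 1 by ring, show j + k + 1 + 1 = j + k + 2 by ring,
        show j + 2 * (k + 1) = j + 2 * k + 2 by ring, factorial_succ k] at ihj
      rw [show j + 1 + (k + 1) = j + k + 1 + 1 by ring, descCount_succ_succ,
        show j + k + 1 + 1 + 1 = j + k + 2 + 1 by ring, factorial_succ (j + k + 2),
        show j + 1 + 2 * (k + 1) = j + 2 * k + 2 + 1 by ring, factorial_succ (j + 2 * k + 2),
        factorial_succ k]
      linear_combination (k + 1) * h + (j + k + 3) * ihj

open Nat in
theorem card_av123 (m : ℕ) : (av123 m).card = catalan m := by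
  have h := descCount_mul_factorial 0 m
  simp only [zero_add, one_mul, descCount, zero_le, Finset.filter_true_of_mem, implies_true] at h
  have hc : catalan m * (m ! * (m + 1)!) = (2 * m)! := by
    have := choose_mul_factorial_mul_factorial (show m ≤ 2 * m by omega)
    rw [show 2 * m - m = m by omega, ← centralBinom_eq_two_mul_choose,
      ← succ_mul_catalan_eq_centralBinom] at this
    rw [← this, factorial_succ]
    ring
  exact Nat.eq_of_mul_eq_mul_right (by positivity) (h.trans hc.symm)

theorem IsGenSub.eq_cons_cons_cons {l : List ℕ} {k x y : ℕ} (hg : IsGenSub l k [x, y])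
    (ha : Avoids123 l) (hxy : x < y) (hlen : 3 ≤ l.length) :
    ∃ c t, l = x :: y :: c :: t ∧ c < x := by
  obtain ⟨⟨u, v, rfl⟩, hk, hge, hmax⟩ := hg
  obtain rfl : k = x := by
    have := hge x (by simp)
    simp only [mem_cons, not_mem_nil, or_false] at hk
    omega
  have hu : u = [] := by
    rcases eq_nil_or_concat' u with hu | ⟨u, w, rfl⟩
    · exact hu
    by_cases hw : k ≤ w
    · have := hmax [w, k, y] ⟨u, v, by simp⟩ (by simp) (by simp [hw, hxy.le])
      simp at this
    · have hinf : [w, k, y] <:+: u ++ [w] ++ [k, y] ++ v := ⟨u, v, by simp⟩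
      exact (ha w k y hinf.sublist (by omega) hxy).elim
  subst hu
  obtain ⟨c, t, rfl⟩ : ∃ c t, v = c :: t := by
    cases v with
    | nil => simp at hlen
    | cons c t => exact ⟨c, t, rfl⟩
  refine ⟨c, t, rfl, not_le.1 fun hc => ?_⟩
  have := hmax [k, y, c] ⟨[], t, rfl⟩ (by simp) (by simp [hc, hxy.le])
  simp at this

theorem isGenSub_cons_cons_cons {a b c : ℕ} {t : List ℕ} (hnd : (a :: b :: c :: t).Nodup)
    (hab : a < b) (hca : c < a) : IsGenSub (a :: b :: c :: t) a [a, b] := by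
  refine ⟨⟨[], c :: t, rfl⟩, by simp, by simp [hab.le], fun t' ⟨u, w, he⟩ ha hge => ?_⟩
  obtain rfl : u = [] := by
    rcases u with _ | ⟨u₀, u⟩
    · rfl
    simp only [cons_append, cons.injEq] at he
    obtain ⟨rfl, he⟩ := he
    exact ((nodup_cons.1 hnd).1 (he ▸ by simp [ha])).elim
  refine not_lt.1 fun hlong => ?_
  obtain ⟨a', b', c', t', rfl⟩ : ∃ a' b' c' t'', t' = a' :: b' :: c' :: t'' := by
    match t', hlong with
    | a' :: b' :: c' :: t', _ => exact ⟨a', b', c', t', rfl⟩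
  simp only [nil_append, cons_append, cons.injEq] at he
  have := hge c' (by simp)
  omega

theorem exists_isGenSub_iff {l : List ℕ} (ha : Avoids123 l) (hnd : l.Nodup)
    (hlen : 3 ≤ l.length) :
    (∃ k s, IsGenSub l k s ∧ s.length = 2 ∧ s.IsChain (· < ·)) ↔
      ∃ a b c t, l = a :: b :: c :: t ∧ a < b ∧ c < a := by
  constructor
  · rintro ⟨k, s, hg, hs, hc⟩
    obtain ⟨x, y, rfl⟩ := length_eq_two.1 hs
    have hxy : x < y := by simpa using hc
    obtain ⟨c, t, rfl, hcx⟩ := hg.eq_cons_cons_cons ha hxy hlen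
    exact ⟨x, y, c, t, rfl, hxy, hcx⟩
  · rintro ⟨a, b, c, t, rfl, hab, hca⟩
    exact ⟨a, [a, b], isGenSub_cons_cons_cons hnd hab hca, rfl, by simpa using hab⟩

theorem forall_isGenSub_length_le_one_iff {l : List ℕ} (ha : Avoids123 l) :
    (∀ k s, IsGenSub l k s → s.IsChain (· < ·) → s.length ≤ 1) ↔
      ¬ ∃ k s, IsGenSub l k s ∧ s.length = 2 ∧ s.IsChain (· < ·) := by
  constructor
  · rintro h ⟨k, s, hg, hs, hc⟩
    have := h k s hg hc
    omega
  · intro h k s hg hc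
    have := ha.length_le_two hg.1.sublist hc
    by_contra hs
    exact h ⟨k, s, hg, by omega, hc⟩

theorem exists_cons_cons_cons_iff_of_mem_av123_succ {m : ℕ} {σ : List ℕ}
    (hσ : σ ∈ av123 (m + 1)) :
    (∃ a b c t, σ = a :: b :: c :: t ∧ a < b ∧ c < a) ↔
      σ.idxOf (m + 1) = 1 ∧ 2 ≤ descPrefixLength (σ.erase (m + 1)) := by
  obtain ⟨u, v, rfl, huv, hu⟩ := exists_eq_append_cons_of_mem_av123_succ hσ
  have hM := succ_notMem_of_append_mem_av123 huv
  have hle : ∀ x ∈ u ++ v, x ≤ m := fun x hx => ((mem_iff_of_mem_av123 huv).1 hx).2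
  simp only [idxOf_append_of_notMem hM, erase_append_right _ hM, erase_cons_head,
    idxOf_cons_self, add_zero]
  constructor
  · rintro ⟨a, b, c, t, he, hab, hca⟩
    rcases u with _ | ⟨a', _ | ⟨b', u⟩⟩ <;> simp only [nil_append, cons_append, cons.injEq] at he
    · have := hle b (by simp [he.2])
      omega
    · obtain ⟨rfl, rfl, rfl⟩ := he
      simp [two_le_descPrefixLength_cons_cons, hca.le]
    · obtain ⟨rfl, rfl, -⟩ := he
      have := (isChain_cons_cons.1 hu).1
      omega
  · rintro ⟨h₁, h₂⟩
    obtain ⟨a, rfl⟩ := length_eq_one_iff.1 h₁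
    obtain ⟨c, t, rfl⟩ : ∃ c t, v = c :: t := by
      cases v with
      | nil => simp [descPrefixLength] at h₂
      | cons c t => exact ⟨c, t, rfl⟩
    have hca : c ≠ a := by
      rintro rfl
      exact (nodup_cons.1 (nodup_of_mem_av123 huv)).1 mem_cons_self
    have := two_le_descPrefixLength_cons_cons.1 h₂
    have := hle a (by simp)
    exact ⟨a, m + 1, c, t, rfl, by omega, by omega⟩

theorem card_filter_exists_cons_cons_cons (m : ℕ) :
    ((av123 (m + 1)).filter fun σ => ∃ a b c t, σ = a :: b :: c :: t ∧ a < b ∧ c < a).card =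
      descCount m 2 := calc
  _ = ((av123 (m + 1)).filter fun σ =>
        σ.idxOf (m + 1) = 1 ∧ 2 ≤ descPrefixLength (σ.erase (m + 1))).card :=
    congrArg _ <| Finset.filter_congr fun _ hσ => exists_cons_cons_cons_iff_of_mem_av123_succ hσ
  _ = descCount m 2 := by
    rw [card_filter_idxOf_succ 1 (2 ≤ descPrefixLength ·), descCount]
    exact congrArg _ <| Finset.filter_congr fun _ _ => by omega

theorem card_filter_exists_isGenSub {m : ℕ} (hm : 2 ≤ m) :
    ((av123 (m + 1)).filter fun l =>
      ∃ k s, IsGenSub l k s ∧ s.length = 2 ∧ s.IsChain (· < ·)).card = descCount m 2 := by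
  rw [← card_filter_exists_cons_cons_cons]
  exact congrArg _ <| Finset.filter_congr fun l hl => exists_isGenSub_iff (mem_av123.1 hl).2
    (nodup_of_mem_av123 hl) (by rw [length_of_mem_av123 hl]; omega)

theorem card_filter_forall_isGenSub_add_card_filter_exists (n : ℕ) :
    ((av123 n).filter fun l =>
        ∀ k s, IsGenSub l k s → s.IsChain (· < ·) → s.length ≤ 1).card +
      ((av123 n).filter fun l =>
        ∃ k s, IsGenSub l k s ∧ s.length = 2 ∧ s.IsChain (· < ·)).card = catalan n := by
  rw [← card_av123, ← Finset.card_filter_add_card_filter_not (s := av123 n) fun l =>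
      ∃ k s, IsGenSub l k s ∧ s.length = 2 ∧ s.IsChain (· < ·), add_comm,
    Finset.filter_congr fun l hl => forall_isGenSub_length_le_one_iff (mem_av123.1 hl).2]

/-- For `n ≥ 3`, the number of permutations in `Av_n(123)` containing an
increasing sub-permutation of size `2` is `a_n = 3(2n−4)!/((n−3)! n!)`
(stated multiplicatively), and the number whose largest increasing
sub-permutation has size `1` is `c_n − a_n`. -/
theorem av123_increasing_subperm_counts (n : ℕ) (hn : 3 ≤ n) :
    (Nat.card {l : List ℕ // IsPermList n l ∧ AvoidsPat [1, 2, 3] l ∧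
          ∃ k s, IsGenSub l k s ∧ s.length = 2 ∧ s.Chain' (· < ·)}) *
        ((n - 3).factorial * n.factorial) = 3 * (2 * n - 4).factorial ∧
    Nat.card {l : List ℕ // IsPermList n l ∧ AvoidsPat [1, 2, 3] l ∧
          ∀ k s, IsGenSub l k s → s.Chain' (· < ·) → s.length ≤ 1} =
      catalan n -
        Nat.card {l : List ℕ // IsPermList n l ∧ AvoidsPat [1, 2, 3] l ∧
          ∃ k s, IsGenSub l k s ∧ s.length = 2 ∧ s.Chain' (· < ·)} := by
  obtain ⟨k, rfl⟩ : ∃ k, n = k + 3 := ⟨n - 3, by omega⟩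
  -- `Chain'` is `IsChain` only up to unfolding, hence `trans`/`exact` rather than `rw` below.
  have hA := (natCard_eq_card_filter_av123 (k + 3) _).trans
    (card_filter_exists_isGenSub (m := k + 2) (by omega))
  refine ⟨(congrArg (· * _) hA).trans ?_, Nat.eq_sub_of_add_eq ?_⟩
  · rw [show k + 3 - 3 = k by omega, show 2 * (k + 3) - 4 = 2 + 2 * k by omega,
      show k + 3 = 2 + k + 1 by omega, add_comm k 2]
    exact descCount_mul_factorial 2 k
  · rw [natCard_eq_card_filter_av123, natCard_eq_card_filter_av123]
    exact card_filter_forall_isGenSub_add_card_filter_exists (k + 3)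
end

section
/- A permutation π ∈ Av_n(123) with n ≥ 3 has an increasing sub-permutation of size 2 if and only if the first three entries of π form the pattern 231 (i.e., π₁ < π₂, π₃ < π₁). -/
/-! If `[k, b]` with `k < b` is generated by `k` and has a left neighbour `x`, then either
`x < k < b` is a `123` pattern or `[x, k, b]` is a longer substring with entries `≥ k`. So
`[k, b]` is a prefix of `π`, and maximality forces `π₃ < π₁`. Conversely, if `π` starts with
`231`, then `π₁` occurs only once, so every substring through it with entries `≥ π₁` is a
prefix of `[π₁, π₂]`. -/

lemma rescale_of_lt_of_lt {a b c : ℕ} (hab : a < b) (hbc : b < c) :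
    rescale [a, b, c] = [1, 2, 3] := by
  simp [rescale, List.filter, hab.le, hbc.le, (hab.trans hbc).le, not_le.2 hab, not_le.2 hbc,
    not_le.2 (hab.trans hbc)]

lemma AvoidsPat.not_lt_of_lt {l : List ℕ} (hav : AvoidsPat [1, 2, 3] l) {a b c : ℕ}
    (h : [a, b, c].Sublist l) (hab : a < b) : ¬ b < c :=
  fun hbc => hav ⟨[a, b, c], h, rescale_of_lt_of_lt hab hbc⟩

namespace IsGenSub

variable {l : List ℕ} {k : ℕ}

lemma length_le {s t : List ℕ} (h : IsGenSub l k s) (ht : t <:+: l) (hk : k ∈ t)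
    (hge : ∀ x ∈ t, k ≤ x) : t.length ≤ s.length :=
  h.2.2.2 t ht hk hge

lemma eq_left_of_lt {a b : ℕ} (h : IsGenSub l k [a, b]) (hab : a < b) : k = a := by
  obtain rfl | rfl : k = a ∨ k = b := by simpa using h.2.1
  · rfl
  · exact absurd (h.2.2.1 a (by simp)) (not_le.2 hab)

lemma prefix_of_lt {b : ℕ} (h : IsGenSub l k [k, b]) (hkb : k < b)
    (hav : AvoidsPat [1, 2, 3] l) : [k, b] <+: l := by
  obtain ⟨p, q, hpq⟩ := h.1
  rcases p.eq_nil_or_concat with rfl | ⟨p', x, rfl⟩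
  · exact ⟨q, hpq⟩
  · have hinf : [x, k, b] <:+: l := ⟨p', q, by simpa using hpq⟩
    rcases lt_or_ge x k with hxk | hkx
    · exact absurd hkb (hav.not_lt_of_lt hinf.sublist hxk)
    · have := h.length_le hinf (by simp) (by simp [hkx, hkb.le])
      simp at this

end IsGenSub

lemma isGenSub_of_lt_of_lt {a b c : ℕ} {rest : List ℕ} (hnd : (a :: b :: c :: rest).Nodup)
    (hca : c < a) (hab : a < b) : IsGenSub (a :: b :: c :: rest) a [a, b] := by
  refine ⟨⟨[], c :: rest, by simp⟩, by simp, by simp [hab.le], fun t ht hat hge => ?_⟩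
  have hpre : t <+: a :: b :: c :: rest := by
    refine (List.infix_cons_iff.1 ht).resolve_right fun ht' => ?_
    exact (List.nodup_cons.1 hnd).1 (ht'.subset hat)
  by_contra! hlen
  have habc : [a, b, c] <+: t :=
    List.prefix_of_prefix_length_le (by simp) hpre hlen
  exact absurd (hge c (habc.subset (by simp))) (not_le.2 hca)

theorem exists_isGenSub_increasing_pair_iff {a b c : ℕ} {rest : List ℕ}
    (hnd : (a :: b :: c :: rest).Nodup) (hav : AvoidsPat [1, 2, 3] (a :: b :: c :: rest)) :
    (∃ k s, IsGenSub (a :: b :: c :: rest) k s ∧ s.length = 2 ∧ s.IsChain (· < ·)) ↔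
      c < a ∧ a < b := by
  constructor
  · rintro ⟨k, s, hgen, hs, hchain⟩
    obtain ⟨k', b', rfl⟩ : ∃ k' b', s = [k', b'] := List.length_eq_two.1 hs
    have hkb : k' < b' := List.isChain_pair.1 hchain
    obtain rfl := hgen.eq_left_of_lt hkb
    obtain ⟨rfl, rfl⟩ : k = a ∧ b' = b := by
      simpa [List.cons_prefix_cons] using hgen.prefix_of_lt hkb hav
    refine ⟨not_le.1 fun hkc => ?_, hkb⟩
    have := hgen.length_le (t := [k, b', c]) ⟨[], rest, by simp⟩ (by simp) (by simp [hkb.le, hkc])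
    simp at this
  · rintro ⟨hca, hab⟩
    exact ⟨a, [a, b], isGenSub_of_lt_of_lt hnd hca hab, rfl, List.isChain_pair.2 hab⟩

/-- A permutation `π ∈ Av_n(123)` with `n ≥ 3` has an increasing
sub-permutation of size `2` if and only if its first three entries form the
pattern `231`, i.e. `π₃ < π₁ < π₂`. -/
theorem av123_increasing_iff_231_start (n : ℕ) (hn : 3 ≤ n) (l : List ℕ)
    (hl : IsPermList n l) (hav : AvoidsPat [1, 2, 3] l) :
    (∃ k s, IsGenSub l k s ∧ s.length = 2 ∧ s.Chain' (· < ·)) ↔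
      (l.getD 2 0 < l.getD 0 0 ∧ l.getD 0 0 < l.getD 1 0) := by
  have hnd : l.Nodup := hl.nodup_iff.2 (List.nodup_range' ..)
  have hlen : 3 ≤ l.length := by simpa [hl.length_eq] using hn
  obtain ⟨a, b, c, rest, rfl⟩ : ∃ a b c rest, l = a :: b :: c :: rest := by
    match l, hlen with
    | a :: b :: c :: rest, _ => exact ⟨a, b, c, rest, rfl⟩
  exact (exists_isGenSub_increasing_pair_iff hnd hav).trans (by simp)
end

section
/- The formal power series M(x) = (1/4)(−1 + sqrt(1−4x))(−1 + sqrt(1−4x) + 2x) has coefficients [xⁿ]M(x) = 3(2n−4)!/((n−3)! n!) for all n ≥ 3. -/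
/-!
With `C = ∑ catalan n xⁿ` the Catalan series, `C = 1 + x C²` gives `(1 - 2xC)² = 1 - 4x`, and a
square root of `1 - 4x` with constant term `1` is unique, so `S = 1 - 2xC`. Substituting,
`M = x² (C² - C)`; as `[xⁿ] C² = catalan (n + 1)`, the coefficients of `M` are differences
`catalan (n - 1) - catalan (n - 2)` of consecutive Catalan numbers, which the factorial formula
for `catalan` turns into `3 (2n - 4)! / ((n - 3)! n!)`.
-/

theorem cast_catalan {K : Type*} [Field K] [CharZero K] (n : ℕ) :
    (catalan n : K) = (2 * n).factorial / (n.factorial * (n + 1).factorial) := by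
  have hf (k : ℕ) : (k.factorial : K) ≠ 0 := Nat.cast_ne_zero.2 k.factorial_ne_zero
  have h : ((n + 1 : ℕ) : K) * catalan n = (2 * n).factorial / (n.factorial * n.factorial) := by
    rw [← Nat.cast_mul, succ_mul_catalan_eq_centralBinom, Nat.centralBinom,
      Nat.cast_choose K (by omega), show 2 * n - n = n by omega]
  rw [eq_div_iff (mul_ne_zero (hf _) (hf _))] at h ⊢
  rw [← h, Nat.factorial_succ]
  push_cast
  ring

theorem cast_catalan_add_two_sub_cast_catalan_add_one {K : Type*} [Field K] [CharZero K]
    (m : ℕ) :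
    (catalan (m + 2) : K) - catalan (m + 1) =
      3 * (2 * m + 2).factorial / (m.factorial * (m + 3).factorial) := by
  have hf : (m.factorial : K) ≠ 0 := Nat.cast_ne_zero.2 m.factorial_ne_zero
  have h1 : ((m + 1 : ℕ) : K) ≠ 0 := Nat.cast_ne_zero.2 (by omega)
  have h2 : ((m + 1 + 1 : ℕ) : K) ≠ 0 := Nat.cast_ne_zero.2 (by omega)
  have h3 : ((m + 2 + 1 : ℕ) : K) ≠ 0 := Nat.cast_ne_zero.2 (by omega)
  rw [cast_catalan, cast_catalan, show 2 * (m + 2) = 2 * m + 2 + 1 + 1 by ring,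
    show 2 * (m + 1) = 2 * m + 2 by ring, Nat.factorial_succ (2 * m + 2 + 1),
    Nat.factorial_succ (2 * m + 2), Nat.factorial_succ (m + 2), Nat.factorial_succ (m + 1),
    Nat.factorial_succ m]
  push_cast at h1 h2 h3 ⊢
  field_simp
  ring

namespace PowerSeries

theorem coeff_catalanSeries_sq (n : ℕ) : coeff n (catalanSeries ^ 2) = catalan (n + 1) := by
  rw [← catalanSeries_coeff, ← catalanSeries_sq_mul_X_add_one, map_add, coeff_succ_mul_X,
    coeff_one, if_neg n.succ_ne_zero, add_zero, catalanSeries_sq_mul_X_add_one]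

theorem eq_of_sq_eq_sq_of_constantCoeff_add_ne_zero {R : Type*} [CommRing R] [IsDomain R]
    {f g : R⟦X⟧} (h : f ^ 2 = g ^ 2) (h0 : constantCoeff (f + g) ≠ 0) : f = g := by
  rcases sq_eq_sq_iff_eq_or_eq_neg.mp h with h | h
  · exact h
  · exact absurd (by rw [h, neg_add_cancel, map_zero]) h0

variable {R : Type*} [CommRing R]

theorem one_sub_two_X_mul_catalanSeries_sq :
    (1 - 2 * X * map (Nat.castRingHom R) catalanSeries) ^ 2 = 1 - 4 * X := by
  have h := congrArg (map (Nat.castRingHom R)) catalanSeries_sq_mul_X_add_one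
  rw [map_add, map_mul, map_pow, map_X, map_one] at h
  linear_combination (4 * X) * h

theorem eq_one_sub_two_X_mul_catalanSeries [IsDomain R] (h2 : (2 : R) ≠ 0) {S : R⟦X⟧}
    (hS0 : coeff 0 S = 1) (hS : S ^ 2 = 1 - 4 * X) :
    S = 1 - 2 * X * map (Nat.castRingHom R) catalanSeries := by
  refine eq_of_sq_eq_sq_of_constantCoeff_add_ne_zero
    (hS.trans one_sub_two_X_mul_catalanSeries_sq.symm) ?_
  rw [map_add, ← coeff_zero_eq_constantCoeff_apply, hS0]
  simpa [one_add_one_eq_two] using h2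

theorem coeff_X_sq_mul_catalanSeries_sq_sub_catalanSeries (n : ℕ) :
    coeff (n + 2) (X ^ 2 * ((map (Nat.castRingHom R) catalanSeries) ^ 2 -
      map (Nat.castRingHom R) catalanSeries)) = (catalan (n + 1) - catalan n : R) := by
  rw [coeff_X_pow_mul, map_sub, ← map_pow, coeff_map, coeff_map, coeff_catalanSeries_sq,
    catalanSeries_coeff, Nat.coe_castRingHom]

end PowerSeries

open PowerSeries in
/-- The formal power series `M(x) = (1/4)(−1 + sqrt(1−4x))(−1 + sqrt(1−4x) + 2x)`
has coefficients `[xⁿ]M(x) = 3(2n−4)!/((n−3)! n!)` for all `n ≥ 3`.  Here `S`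
is the formal square root of `1 − 4x` with constant term `1`. -/
theorem M2_coefficients (S : PowerSeries ℚ)
    (hS0 : S.coeff 0 = 1) (hS : S ^ 2 = 1 - 4 * X) :
    ∀ n : ℕ, 3 ≤ n →
      (((1 : ℚ)/4) • ((-1 + S) * (-1 + S + 2 * X))).coeff n =
        (3 * (2 * n - 4).factorial : ℚ) /
          (((n - 3).factorial : ℚ) * (n.factorial : ℚ)) := by
  intro n hn
  obtain ⟨m, rfl⟩ := Nat.exists_eq_add_of_le' hn
  set C := map (Nat.castRingHom ℚ) catalanSeries
  have hM : ((1 : ℚ) / 4) • ((-1 + (1 - 2 * X * C)) * (-1 + (1 - 2 * X * C) + 2 * X)) =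
      X ^ 2 * (C ^ 2 - C) := by
    rw [show (-1 + (1 - 2 * X * C)) * (-1 + (1 - 2 * X * C) + 2 * X) =
        (4 : ℚ) • (X ^ 2 * (C ^ 2 - C)) by rw [ofNat_smul_eq_nsmul, nsmul_eq_mul]; push_cast; ring,
      smul_smul]
    norm_num
  rw [eq_one_sub_two_X_mul_catalanSeries two_ne_zero hS0 hS, hM,
    coeff_X_sq_mul_catalanSeries_sq_sub_catalanSeries (m + 1), Nat.add_sub_cancel,
    show 2 * (m + 3) - 4 = 2 * m + 2 by omega]
  exact cast_catalan_add_two_sub_cast_catalan_add_one m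
end

section
/- The number of Dyck paths of semi-length n avoiding the factor UUUD (the case j=1) equals the n-th Motzkin number. -/
/-- A Dyck path of semi-length `n`: a word over `{U, D}` (here `true = U`,
`false = D`) of length `2n` with `n` up-steps and every prefix having at least
as many `U`'s as `D`'s. -/
def IsDyck (n : ℕ) (p : List Bool) : Prop :=
  p.length = 2 * n ∧ p.count true = n ∧
    ∀ q : List Bool, q <+: p → q.count false ≤ q.count true

/-- A Motzkin path of length `n`: steps `(1,1), (1,−1), (1,0)` (encoded by
their height increments `1, −1, 0`), starting and ending at height `0` and
never going below the `x`-axis. -/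
def IsMotzkin (n : ℕ) (w : List ℤ) : Prop :=
  w.length = n ∧ (∀ s ∈ w, s = 1 ∨ s = -1 ∨ s = 0) ∧ w.sum = 0 ∧
    ∀ q : List ℤ, q <+: w → 0 ≤ q.sum

def enc : List ℤ → List Bool
  | [] => []
  | a :: w => (if a = 1 then [true, true, false] else if a = 0 then [true, false] else [false]) ++ enc w

def Valid (w : List ℤ) : Prop := ∀ s ∈ w, s = 1 ∨ s = -1 ∨ s = 0

lemma enc_count_false {w : List ℤ} (hv : Valid w) : (enc w).count false = w.length := by
  induction w with
  | nil => simp [enc]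
  | cons a w ih =>
    have ha := hv a (by simp)
    have hw : Valid w := fun s hs => hv s (by simp [hs])
    rcases ha with h | h | h <;> simp [enc, h, ih hw, List.count_cons, List.count_append] <;> omega

lemma enc_count_true {w : List ℤ} (hv : Valid w) : ((enc w).count true : ℤ) = w.length + w.sum := by
  induction w with
  | nil => simp [enc]
  | cons a w ih =>
    have ha := hv a (by simp)
    have hw : Valid w := fun s hs => hv s (by simp [hs])
    rcases ha with h | h | h <;>
      simp [enc, h, List.count_cons, List.count_append] <;> rw [ih hw] <;> ring

lemma enc_prefix {w : List ℤ} (hv : Valid w) (h : ℤ) (h0 : 0 ≤ h)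
    (hpre : ∀ q : List ℤ, q <+: w → 0 ≤ h + q.sum) :
    ∀ q : List Bool, q <+: enc w → (q.count false : ℤ) ≤ h + q.count true := by
  induction w generalizing h with
  | nil => intro q hq; simp [enc] at hq; simp [hq]; omega
  | cons a w ih =>
    have ha := hv a (by simp)
    have hw : Valid w := fun s hs => hv s (by simp [hs])
    intro q hq
    rcases ha with h1 | h1 | h1
    · -- a = 1 : block [true, true, false], height goes to h+1
      have hrec := ih hw (h + 1) (by omega) (fun q hq => by
        have := hpre (1 :: q) (by rw [h1]; exact List.cons_prefix_cons.mpr ⟨rfl, hq⟩)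
        simp at this; omega)
      simp only [enc, h1] at hq
      norm_num at hq
      rw [List.prefix_cons_iff] at hq
      rcases hq with rfl | ⟨t, rfl, ht⟩
      · simp; omega
      rw [List.prefix_cons_iff] at ht
      rcases ht with rfl | ⟨t, rfl, ht⟩
      · simp [List.count_cons]; omega
      rw [List.prefix_cons_iff] at ht
      rcases ht with rfl | ⟨t, rfl, ht⟩
      · simp [List.count_cons]; omega
      · have := hrec t ht
        simp [List.count_cons]
        push_cast
        omega
    · -- a = -1 : block [false], height h ≥ 1
      have hh1 : (1:ℤ) ≤ h := by have := hpre [-1] ⟨w, by simp [h1]⟩; simp at this; omega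
      have hrec := ih hw (h - 1) (by omega) (fun q hq => by
        have := hpre (-1 :: q) (by rw [h1]; exact List.cons_prefix_cons.mpr ⟨rfl, hq⟩)
        simp at this; omega)
      simp only [enc, h1] at hq
      norm_num at hq
      rw [List.prefix_cons_iff] at hq
      rcases hq with rfl | ⟨t, rfl, ht⟩
      · simp; omega
      · have := hrec t ht
        simp [List.count_cons]
        push_cast
        omega
    · -- a = 0 : block [true, false]
      have hrec := ih hw h (by omega) (fun q hq => by
        have := hpre (0 :: q) (by rw [h1]; exact List.cons_prefix_cons.mpr ⟨rfl, hq⟩)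
        simp at this; omega)
      simp only [enc, h1] at hq
      norm_num at hq
      rw [List.prefix_cons_iff] at hq
      rcases hq with rfl | ⟨t, rfl, ht⟩
      · simp; omega
      rw [List.prefix_cons_iff] at ht
      rcases ht with rfl | ⟨t, rfl, ht⟩
      · simp [List.count_cons]; omega
      · have := hrec t ht
        simp [List.count_cons]
        push_cast
        omega

lemma enc_no_ttt {w : List ℤ} (hv : Valid w) :
    ∀ s : List Bool, s <:+ enc w → ¬ [true, true, true] <+: s := by
  induction w with
  | nil => intro s hs; simp [enc] at hs; simp [hs]
  | cons a w ih =>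
    have ha := hv a (by simp)
    have hw : Valid w := fun s hs => hv s (by simp [hs])
    intro s hs
    rcases ha with h1 | h1 | h1 <;> simp only [enc, h1] at hs <;> norm_num at hs
    · rw [List.suffix_cons_iff] at hs
      rcases hs with rfl | hs
      · intro hc
        rcases List.cons_prefix_cons.mp hc with ⟨-, hc⟩
        rcases List.cons_prefix_cons.mp hc with ⟨-, hc⟩
        rcases List.cons_prefix_cons.mp hc with ⟨hc, -⟩
        exact Bool.false_ne_true hc.symm
      rw [List.suffix_cons_iff] at hs
      rcases hs with rfl | hs
      · intro hc
        rcases List.cons_prefix_cons.mp hc with ⟨-, hc⟩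
        rcases List.cons_prefix_cons.mp hc with ⟨hc, -⟩
        exact Bool.false_ne_true hc.symm
      rw [List.suffix_cons_iff] at hs
      rcases hs with rfl | hs
      · intro hc
        rcases List.cons_prefix_cons.mp hc with ⟨hc, -⟩
        exact Bool.false_ne_true hc.symm
      · exact ih hw s hs
    · rw [List.suffix_cons_iff] at hs
      rcases hs with rfl | hs
      · intro hc
        rcases List.cons_prefix_cons.mp hc with ⟨hc, -⟩
        exact Bool.false_ne_true hc.symm
      · exact ih hw s hs
    · rw [List.suffix_cons_iff] at hs
      rcases hs with rfl | hs
      · intro hc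
        rcases List.cons_prefix_cons.mp hc with ⟨-, hc⟩
        rcases List.cons_prefix_cons.mp hc with ⟨hc, -⟩
        exact Bool.false_ne_true hc.symm
      rw [List.suffix_cons_iff] at hs
      rcases hs with rfl | hs
      · intro hc
        rcases List.cons_prefix_cons.mp hc with ⟨hc, -⟩
        exact Bool.false_ne_true hc.symm
      · exact ih hw s hs

lemma enc_avoid {w : List ℤ} (hv : Valid w) : ¬ [true, true, true, false] <:+: enc w := by
  intro ⟨l, r, hlr⟩
  have hs : [true, true, true, false] ++ r <:+ enc w := ⟨l, by rw [← hlr]; simp⟩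
  exact enc_no_ttt hv _ hs (by simp)

lemma enc_inj {w v : List ℤ} (hw : Valid w) (hv : Valid v) (h : enc w = enc v) : w = v := by
  induction w generalizing v with
  | nil =>
    cases v with
    | nil => rfl
    | cons b v =>
      exfalso
      have hb := hv b (by simp)
      rcases hb with h1 | h1 | h1 <;> rw [h1] at h <;> simp [enc] at h
  | cons a w ih =>
    cases v with
    | nil =>
      exfalso
      have ha := hw a (by simp)
      rcases ha with h1 | h1 | h1 <;> rw [h1] at h <;> simp [enc] at h
    | cons b v =>
      have ha := hw a (by simp)
      have hb := hv b (by simp)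
      have hw' : Valid w := fun s hs => hw s (by simp [hs])
      have hv' : Valid v := fun s hs => hv s (by simp [hs])
      rcases ha with h1 | h1 | h1 <;> rcases hb with h2 | h2 | h2 <;>
        rw [h1, h2] at h ⊢ <;> simp [enc] at h <;> simp [ih hw' hv' h]

lemma rep_shift (m : ℕ) (X : List Bool) :
    List.replicate m true ++ true :: X = true :: (List.replicate m true ++ X) := by
  induction m with
  | zero => simp
  | succ k ih => simp only [List.replicate_succ, List.cons_append, ih]

lemma exists_false_split {l : List Bool} (h : l.count false ≠ 0) :
    ∃ m t, l = List.replicate m true ++ false :: t := by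
  induction l with
  | nil => simp at h
  | cons a l ih =>
    cases a with
    | false => exact ⟨0, l, by simp⟩
    | true =>
      simp [List.count_cons] at h
      obtain ⟨m, t, ht⟩ := ih h
      exact ⟨m + 1, t, by simp [List.replicate_succ, ht]⟩

lemma decode (p : List Bool) (h : ℤ) (h0 : 0 ≤ h)
    (hpre : ∀ q : List Bool, q <+: p → (q.count false : ℤ) ≤ h + q.count true)
    (hbal : (p.count true : ℤ) + h = p.count false)
    (havoid : ¬ [true, true, true, false] <:+: p) :
    ∃ w : List ℤ, Valid w ∧ w.sum = -h ∧ (∀ q : List ℤ, q <+: w → 0 ≤ h + q.sum) ∧ enc w = p := by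
  match p with
  | [] =>
    have hh : h = 0 := by simp at hbal; omega
    exact ⟨[], fun s hs => by simp at hs, by simp [hh], fun q hq => by simp at hq; simp [hq, hh], rfl⟩
  | [true] =>
    exfalso; simp [List.count_cons] at hbal; omega
  | [true, true] =>
    exfalso; simp [List.count_cons] at hbal; omega
  | true :: true :: true :: rest =>
    exfalso
    have hcf : rest.count false ≠ 0 := by
      simp [List.count_cons] at hbal; omega
    obtain ⟨m, t, ht⟩ := exists_false_split hcf
    apply havoid
    refine ⟨List.replicate m true, t, ?_⟩
    rw [ht]
    simp only [List.append_assoc, List.cons_append, List.nil_append]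
    rw [rep_shift, rep_shift, rep_shift]
  | false :: rest =>
    have hh1 : (1:ℤ) ≤ h := by
      have := hpre [false] ⟨rest, rfl⟩
      simp at this; omega
    obtain ⟨w, hw1, hw2, hw3, hw4⟩ := decode rest (h - 1) (by omega)
      (fun q hq => by
        have := hpre (false :: q) (List.cons_prefix_cons.mpr ⟨rfl, hq⟩)
        simp [List.count_cons] at this; push_cast at this ⊢; omega)
      (by simp [List.count_cons] at hbal; push_cast at hbal ⊢; omega)
      (fun hc => havoid (hc.trans (show rest <:+ false :: rest from ⟨[false], rfl⟩).isInfix))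
    refine ⟨-1 :: w, ?_, by rw [List.sum_cons, hw2]; ring, ?_, by norm_num [enc, hw4]⟩
    · intro s hs; rw [List.mem_cons] at hs; rcases hs with rfl | hs
      · right; left; rfl
      · exact hw1 s hs
    · intro q hq
      rw [List.prefix_cons_iff] at hq
      rcases hq with rfl | ⟨t, rfl, ht⟩
      · simp; omega
      · have := hw3 t ht; simp; omega
  | true :: false :: rest =>
    obtain ⟨w, hw1, hw2, hw3, hw4⟩ := decode rest h h0
      (fun q hq => by
        have := hpre (true :: false :: q)
          (List.cons_prefix_cons.mpr ⟨rfl, List.cons_prefix_cons.mpr ⟨rfl, hq⟩⟩)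
        simp [List.count_cons] at this; push_cast at this ⊢; omega)
      (by simp [List.count_cons] at hbal; push_cast at hbal ⊢; omega)
      (fun hc => havoid (hc.trans (show rest <:+ true :: false :: rest from ⟨[true, false], rfl⟩).isInfix))
    refine ⟨0 :: w, ?_, by rw [List.sum_cons, hw2]; ring, ?_, by norm_num [enc, hw4]⟩
    · intro s hs; rw [List.mem_cons] at hs; rcases hs with rfl | hs
      · right; right; rfl
      · exact hw1 s hs
    · intro q hq
      rw [List.prefix_cons_iff] at hq
      rcases hq with rfl | ⟨t, rfl, ht⟩
      · simp; omega
      · have := hw3 t ht; simp; omega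
  | true :: true :: false :: rest =>
    obtain ⟨w, hw1, hw2, hw3, hw4⟩ := decode rest (h + 1) (by omega)
      (fun q hq => by
        have := hpre (true :: true :: false :: q)
          (List.cons_prefix_cons.mpr ⟨rfl, List.cons_prefix_cons.mpr ⟨rfl,
            List.cons_prefix_cons.mpr ⟨rfl, hq⟩⟩⟩)
        simp [List.count_cons] at this; push_cast at this ⊢; omega)
      (by simp [List.count_cons] at hbal; push_cast at hbal ⊢; omega)
      (fun hc => havoid (hc.trans (show rest <:+ true :: true :: false :: rest from ⟨[true, true, false], rfl⟩).isInfix))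
    refine ⟨1 :: w, ?_, by rw [List.sum_cons, hw2]; ring, ?_, by norm_num [enc, hw4]⟩
    · intro s hs; rw [List.mem_cons] at hs; rcases hs with rfl | hs
      · left; rfl
      · exact hw1 s hs
    · intro q hq
      rw [List.prefix_cons_iff] at hq
      rcases hq with rfl | ⟨t, rfl, ht⟩
      · simp; omega
      · have := hw3 t ht; simp; omega
termination_by p.length

lemma bool_len (l : List Bool) : l.length = l.count true + l.count false := by
  induction l with
  | nil => simp
  | cons a l ih =>
    cases a <;> simp only [List.count_cons, List.length_cons, ih] <;> simp <;> omega

lemma repl_eq : List.replicate 3 true ++ [false] = [true, true, true, false] := by decide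

lemma enc_mem {n : ℕ} {w : List ℤ} (hm : IsMotzkin n w) :
    IsDyck n (enc w) ∧ ¬ (List.replicate 3 true ++ [false]) <:+: enc w := by
  obtain ⟨hlen, hval, hsum, hpre⟩ := hm
  have hcf := enc_count_false hval
  have hct := enc_count_true hval
  rw [hsum, add_zero] at hct
  have hctn : (enc w).count true = n := by
    rw [hlen] at hct; exact_mod_cast hct
  have hl := bool_len (enc w)
  refine ⟨⟨by omega, hctn, ?_⟩, ?_⟩
  · intro q hq
    have := enc_prefix hval 0 le_rfl (fun q hq => by simpa using hpre q hq) q hq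
    exact_mod_cast by simpa using this
  · rw [repl_eq]; exact enc_avoid hval

/-- The number of Dyck paths of semi-length `n` avoiding the consecutive factor
`UUUD` equals the `n`-th Motzkin number (the number of Motzkin paths of
length `n`). -/
theorem dyck_avoiding_UUUD_eq_motzkin (n : ℕ) :
    Nat.card {p : List Bool // IsDyck n p ∧
        ¬ (List.replicate 3 true ++ [false]) <:+: p} =
      Nat.card {w : List ℤ // IsMotzkin n w} := by
  symm
  apply Nat.card_eq_of_bijective (f := fun w : {w : List ℤ // IsMotzkin n w} =>
    (⟨enc w.1, enc_mem w.2⟩ : {p : List Bool // IsDyck n p ∧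
        ¬ (List.replicate 3 true ++ [false]) <:+: p}))
  constructor
  · rintro ⟨w, hw⟩ ⟨v, hv⟩ hwv
    have : enc w = enc v := congrArg Subtype.val hwv
    exact Subtype.ext (enc_inj hw.2.1 hv.2.1 this)
  · rintro ⟨p, ⟨hlen, hct, hp⟩, havoid⟩
    rw [repl_eq] at havoid
    have hcf : p.count false = n := by have := bool_len p; omega
    obtain ⟨w, hval, hsum, hqpre, hencp⟩ := decode p 0 le_rfl
      (fun q hq => by have := hp q hq; push_cast; omega)
      (by push_cast; omega)
      havoid
    have hwlen : w.length = n := by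
      have := enc_count_false hval; rw [hencp] at this; omega
    exact ⟨⟨w, hwlen, hval, by omega, fun q hq => by have := hqpre q hq; omega⟩,
      Subtype.ext hencp⟩
end
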